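/- arXiv:1208.5332 — 6 statements merged into one kernel-verified Lean document; each statement's English description precedes it below -/
import Mathlib

section
/- If the initial concentrations u_1(0), u_2(0), u_3(0), u_4(0) are nonnegative, then any classical solution of the system u_1' = -k_1(u_2)u_1 - δ k_3(u_3) u_2 u_1^δ + η k_4 u_2 + s, u_2' = μ k_3(u_3) u_2 u_1^δ - k_4 u_2, u_3' = -k_2(u_2) u_3, u_4' = n k_1(u_2) u_1 + k_2(u_2) u_3 remains nonnegative in all four components for all t ≥ 0 in its interval of existence. -/
/-!
A function that starts nonnegative and satisfies `u' ≥ c(t) u` wherever it is negative, with `c`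
continuous on `[a, b]` and hence bounded above by some `L`, stays nonnegative: `e^{-Lt} u` cannot
decrease while it is negative, so it never drops below its last nonnegative value. The components
are handled in the order `u₃, u₂, u₁, u₄`, each using the signs already obtained: `u₃` and `u₄`
cannot decrease while negative, `u₂' = c(t) u₂` is linear in `u₂`, and for `u₁` the power of a
possibly negative base is absorbed by `x ^ δ ≤ |x| ^ (δ - 1) |x|`, where `|u₁| ^ (δ - 1)` is
continuous because `δ ≥ 1`.
-/

open Set

section NonnegInvariance

variable {f f' : ℝ → ℝ} {a b : ℝ}

theorem nonneg_of_deriv_nonneg_of_neg (hf : ∀ t ∈ Icc a b, HasDerivAt f (f' t) t)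
    (ha : 0 ≤ f a) (hf' : ∀ t ∈ Icc a b, f t < 0 → 0 ≤ f' t) :
    ∀ t ∈ Icc a b, 0 ≤ f t := by
  intro t ht
  by_contra! hft
  set A : Set ℝ := Icc a t ∩ f ⁻¹' Ici 0
  have hsub : Icc a t ⊆ Icc a b := Icc_subset_Icc le_rfl ht.2
  have hA : IsClosed A :=
    ((HasDerivAt.continuousOn hf).mono hsub).preimage_isClosed_of_isClosed isClosed_Icc
      isClosed_Ici
  have hAbdd : BddAbove A := ⟨t, fun x hx => hx.1.2⟩
  -- `c` is the last time before `t` at which `f` is nonnegative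
  obtain ⟨⟨hac, hct⟩, hfc : 0 ≤ f (sSup A)⟩ : sSup A ∈ A := hA.csSup_mem ⟨a, ⟨left_mem_Icc.2 ht.1, ha⟩⟩ hAbdd
  set c := sSup A
  have hneg : ∀ s ∈ Ioc c t, f s < 0 := fun s hs => by
    by_contra! hfs
    exact (le_csSup hAbdd ⟨⟨hac.trans hs.1.le, hs.2⟩, hfs⟩).not_gt hs.1
  have hct' : c < t := hct.lt_of_ne fun h => (h ▸ hfc).not_gt hft
  have hmem : ∀ s ∈ Icc c t, s ∈ Icc a b := fun s hs => hsub ⟨hac.trans hs.1, hs.2⟩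
  have hmono : MonotoneOn f (Icc c t) :=
    monotoneOn_of_hasDerivWithinAt_nonneg (convex_Icc c t)
      (HasDerivAt.continuousOn fun s hs => hf s (hmem s hs))
      (fun s hs => (hf s (hmem s (interior_subset hs))).hasDerivWithinAt)
      fun s hs => by
        rw [interior_Icc] at hs
        exact hf' s (hmem s (Ioo_subset_Icc_self hs)) (hneg s (Ioo_subset_Ioc_self hs))
  linarith [hmono ⟨le_rfl, hct'.le⟩ ⟨hct'.le, le_rfl⟩ hct'.le]

theorem nonneg_of_mul_le_deriv_of_neg (L : ℝ) (hf : ∀ t ∈ Icc a b, HasDerivAt f (f' t) t)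
    (ha : 0 ≤ f a) (hf' : ∀ t ∈ Icc a b, f t < 0 → L * f t ≤ f' t) :
    ∀ t ∈ Icc a b, 0 ≤ f t := by
  have hg : ∀ t ∈ Icc a b, HasDerivAt (fun s => Real.exp (-L * s) * f s)
      (Real.exp (-L * t) * (f' t - L * f t)) t := fun t ht =>
    ((hasDerivAt_id' t).const_mul (-L)).exp.fun_mul (hf t ht) |>.congr_deriv (by ring)
  have hgnonneg := nonneg_of_deriv_nonneg_of_neg hg (mul_nonneg (Real.exp_pos _).le ha)
    fun t ht hgt => mul_nonneg (Real.exp_pos _).le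
      (sub_nonneg.2 (hf' t ht (neg_of_mul_neg_right hgt (Real.exp_pos _).le)))
  exact fun t ht => nonneg_of_mul_nonneg_right (hgnonneg t ht) (Real.exp_pos _)

theorem nonneg_of_coeff_mul_le_deriv_of_neg {c : ℝ → ℝ} (hc : ContinuousOn c (Icc a b))
    (hf : ∀ t ∈ Icc a b, HasDerivAt f (f' t) t) (ha : 0 ≤ f a)
    (hf' : ∀ t ∈ Icc a b, f t < 0 → c t * f t ≤ f' t) :
    ∀ t ∈ Icc a b, 0 ≤ f t := by
  obtain ⟨L, hL⟩ := isCompact_Icc.bddAbove_image hc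
  refine nonneg_of_mul_le_deriv_of_neg L hf ha fun t ht hft => ?_
  exact (mul_le_mul_of_nonpos_right (hL (mem_image_of_mem c ht)) hft.le).trans (hf' t ht hft)

end NonnegInvariance

theorem Real.rpow_le_neg_abs_rpow_sub_one_mul {x : ℝ} (hx : x < 0) (y : ℝ) :
    x ^ y ≤ -(|x| ^ (y - 1) * x) := by
  calc x ^ y ≤ |x| ^ y := (le_abs_self _).trans (Real.abs_rpow_le_abs_rpow x y)
    _ = |x| ^ (y - 1) * |x| := by
      rw [← Real.rpow_add_one (abs_ne_zero.2 hx.ne), sub_add_cancel]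
    _ = -(|x| ^ (y - 1) * x) := by rw [abs_of_neg hx]; ring

theorem stmt_0_general
    (δ η μ n k4 s T : ℝ)
    (hδ : 1 ≤ δ) (hη : 0 < η) (hn : 0 < n) (hk4 : 0 < k4) (hs : 0 ≤ s)
    (k1 k2 k3 : ℝ → ℝ)
    (hk1pos : ∀ x, 0 < k1 x) (hk2pos : ∀ x, 0 < k2 x) (hk3pos : ∀ x, 0 < k3 x)
    (hk3lip : ∃ K, LipschitzWith K k3)
    (u1 u2 u3 u4 : ℝ → ℝ)
    (h1 : ∀ t ∈ Set.Icc (0:ℝ) T, HasDerivAt u1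
      (-(k1 (u2 t)) * u1 t - δ * k3 (u3 t) * u2 t * (u1 t) ^ δ + η * k4 * u2 t + s) t)
    (h2 : ∀ t ∈ Set.Icc (0:ℝ) T, HasDerivAt u2
      (μ * k3 (u3 t) * u2 t * (u1 t) ^ δ - k4 * u2 t) t)
    (h3 : ∀ t ∈ Set.Icc (0:ℝ) T, HasDerivAt u3 (-(k2 (u2 t)) * u3 t) t)
    (h4 : ∀ t ∈ Set.Icc (0:ℝ) T, HasDerivAt u4 (n * k1 (u2 t) * u1 t + k2 (u2 t) * u3 t) t)
    (h10 : 0 ≤ u1 0) (h20 : 0 ≤ u2 0) (h30 : 0 ≤ u3 0) (h40 : 0 ≤ u4 0) :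
    ∀ t ∈ Set.Icc (0:ℝ) T, 0 ≤ u1 t ∧ 0 ≤ u2 t ∧ 0 ≤ u3 t ∧ 0 ≤ u4 t := by
  have hk3c : Continuous k3 := let ⟨_, hk3⟩ := hk3lip; hk3.continuous
  have hc1 := HasDerivAt.continuousOn h1
  have hc2 := HasDerivAt.continuousOn h2
  have hc3 := HasDerivAt.continuousOn h3
  have hδ0 : 0 ≤ δ := by linarith
  have hδ1 : 0 ≤ δ - 1 := by linarith
  have hu3 := nonneg_of_deriv_nonneg_of_neg h3 h30 fun t _ hneg =>
    mul_nonneg_of_nonpos_of_nonpos (neg_nonpos.2 (hk2pos _).le) hneg.le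
  have hu2 := nonneg_of_coeff_mul_le_deriv_of_neg
    (c := fun t => μ * k3 (u3 t) * (u1 t) ^ δ - k4) (by fun_prop (disch := assumption))
    h2 h20 fun t _ _ => le_of_eq (by ring)
  have hu1 := nonneg_of_coeff_mul_le_deriv_of_neg
    (c := fun t => δ * k3 (u3 t) * u2 t * |u1 t| ^ (δ - 1))
    (by fun_prop (disch := assumption)) h1 h10 fun t ht hneg => by
      have := hu2 t ht
      have := hk3pos (u3 t)
      have hpow := mul_le_mul_of_nonneg_left (Real.rpow_le_neg_abs_rpow_sub_one_mul hneg δ)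
        (by positivity : 0 ≤ δ * k3 (u3 t) * u2 t)
      have hdecay := mul_nonneg_of_nonpos_of_nonpos (neg_nonpos.2 (hk1pos (u2 t)).le) hneg.le
      have hsource : 0 ≤ η * k4 * u2 t := by positivity
      linear_combination hpow + hdecay + hsource + hs
  have hu4 := nonneg_of_deriv_nonneg_of_neg h4 h40 fun t ht _ => by
    have := hu1 t ht; have := hu3 t ht; have := hk1pos (u2 t); have := hk2pos (u2 t)
    positivity
  exact fun t ht => ⟨hu1 t ht, hu2 t ht, hu3 t ht, hu4 t ht⟩

/-- Nonnegativity of all four components of the soil-charcoal ODE system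
on its interval of existence, given nonnegative initial data. -/
theorem stmt_0
    (δ η μ n k4 s T : ℝ)
    (hδ : 1 ≤ δ) (hη : 0 < η) (hμ : 0 < μ) (hn : 0 < n) (hk4 : 0 < k4) (hs : 0 ≤ s)
    (hT : 0 < T)
    (k1 k2 k3 : ℝ → ℝ)
    (hk1pos : ∀ x, 0 < k1 x) (hk2pos : ∀ x, 0 < k2 x) (hk3pos : ∀ x, 0 < k3 x)
    (hk1lip : ∃ K, LipschitzWith K k1) (hk2lip : ∃ K, LipschitzWith K k2)
    (hk3lip : ∃ K, LipschitzWith K k3)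
    (hk1mono : StrictMono k1) (hk2mono : StrictMono k2) (hk3mono : StrictMono k3)
    (u1 u2 u3 u4 : ℝ → ℝ)
    (h1 : ∀ t ∈ Set.Icc (0:ℝ) T, HasDerivAt u1
      (-(k1 (u2 t)) * u1 t - δ * k3 (u3 t) * u2 t * (u1 t) ^ δ + η * k4 * u2 t + s) t)
    (h2 : ∀ t ∈ Set.Icc (0:ℝ) T, HasDerivAt u2
      (μ * k3 (u3 t) * u2 t * (u1 t) ^ δ - k4 * u2 t) t)
    (h3 : ∀ t ∈ Set.Icc (0:ℝ) T, HasDerivAt u3 (-(k2 (u2 t)) * u3 t) t)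
    (h4 : ∀ t ∈ Set.Icc (0:ℝ) T, HasDerivAt u4 (n * k1 (u2 t) * u1 t + k2 (u2 t) * u3 t) t)
    (h10 : 0 ≤ u1 0) (h20 : 0 ≤ u2 0) (h30 : 0 ≤ u3 0) (h40 : 0 ≤ u4 0) :
    ∀ t ∈ Set.Icc (0:ℝ) T, 0 ≤ u1 t ∧ 0 ≤ u2 t ∧ 0 ≤ u3 t ∧ 0 ≤ u4 t :=
  stmt_0_general δ η μ n k4 s T hδ hη hn hk4 hs k1 k2 k3 hk1pos hk2pos hk3pos hk3lip u1 u2 u3 u4 h1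
    h2 h3 h4 h10 h20 h30 h40
end

section
/- For the system with δ ≥ ημ, δ ≥ 1, and nonnegative initial data, the unique local solution extends to a global classical solution on [0,∞). -/
/-!
For `δ ≥ 1` the map `x ↦ x ^ δ` is `C¹`, so the vector field is locally Lipschitz: Picard–Lindelöf
gives local solutions, and solutions are unique. Replace `u₁ ^ δ` by `(max u₁ 0) ^ δ`. Then no
component can become negative, because wherever it is negative its derivative is at least a
constant times the component. For nonnegative solutions, `u₃ ≤ a₃`, and `μ u₁ + δ u₂` grows at
most like `μ s t` because `η μ ≤ δ`; monotonicity of `k₁, k₂` then bounds `u₄'`. These bounds on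
`[0, T]` give a local existence time that is uniform along the solution, so the solution extends
to all of `[0, ∞)`. There `u₁ ≥ 0`, so the clamp changes nothing and the solution solves the
original system.
-/

open Set Metric Real
open scoped NNReal Topology

theorem image_nonneg_of_deriv_right_ge_mul_of_neg {g g' : ℝ → ℝ} {a b C : ℝ}
    (hg : ContinuousOn g (Icc a b)) (hg' : ∀ t ∈ Ico a b, HasDerivWithinAt g (g' t) (Ici t) t)
    (ha : 0 ≤ g a) (hC : ∀ t ∈ Ico a b, g t < 0 → C * g t ≤ g' t) :
    ∀ t ∈ Icc a b, 0 ≤ g t := by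
  intro t ht
  -- `-g` stays below every barrier `ε e^{(C+1)(t-a)}`, which grows strictly faster than `-g` can.
  have barrier : ∀ ε > 0, -g t ≤ ε * exp ((C + 1) * (t - a)) := fun ε hε ↦
    image_le_of_deriv_right_lt_deriv_boundary hg.neg (fun τ hτ ↦ (hg' τ hτ).neg)
      (B := fun τ ↦ ε * exp ((C + 1) * (τ - a)))
      (B' := fun τ ↦ (C + 1) * (ε * exp ((C + 1) * (τ - a))))
      (by simp only [Pi.neg_apply, sub_self, mul_zero, exp_zero, mul_one]; linarith)
      (fun τ ↦ by
        simpa [mul_comm, mul_left_comm] using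
          (((hasDerivAt_id τ).sub_const a).const_mul (C + 1)).exp.const_mul ε)
      (fun τ hτ hgB ↦ by
        have hB : 0 < ε * exp ((C + 1) * (τ - a)) := by positivity
        simp only [Pi.neg_apply] at hgB
        have hτC := hC τ hτ (by linarith)
        rw [show g τ = -(ε * exp ((C + 1) * (τ - a))) by linarith] at hτC
        linarith) ht
  by_contra! hneg
  have hE : 0 < exp ((C + 1) * (t - a)) := exp_pos _
  have := barrier (-g t / (2 * exp ((C + 1) * (t - a)))) (div_pos (by linarith) (by positivity))
  rw [div_mul_eq_mul_div, mul_div_mul_right _ _ hE.ne'] at this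
  linarith

theorem image_le_add_mul_of_deriv_right_le {f f' : ℝ → ℝ} {a b C : ℝ}
    (hf : ContinuousOn f (Icc a b)) (hf' : ∀ t ∈ Ico a b, HasDerivWithinAt f (f' t) (Ici t) t)
    (hC : ∀ t ∈ Ico a b, f' t ≤ C) : ∀ t ∈ Icc a b, f t ≤ f a + C * (t - a) := fun t ht ↦
  image_le_of_deriv_right_le_deriv_boundary hf hf' (B := fun τ ↦ f a + C * (τ - a)) (by simp)
    (by fun_prop)
    (fun τ _ ↦ by simpa using (((hasDerivAt_id τ).sub_const a).const_mul C).const_add (f a)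
      |>.hasDerivWithinAt) hC ht

theorem LocallyLipschitz.exists_lipschitzOnWith_closedBall {X Y : Type*} [PseudoMetricSpace X]
    [ProperSpace X] [PseudoMetricSpace Y] {f : X → Y} (hf : LocallyLipschitz f) (x : X) (r : ℝ) :
    ∃ K, LipschitzOnWith K f (closedBall x r) :=
  hf.locallyLipschitzOn.exists_lipschitzOnWith_of_compact (isCompact_closedBall x r)

section ProdDeriv

variable {E F : Type*} [NormedAddCommGroup E] [NormedSpace ℝ E] [NormedAddCommGroup F]
  [NormedSpace ℝ F] {f : ℝ → E × F} {f' : E × F} {s : Set ℝ} {t : ℝ}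

theorem HasDerivWithinAt.fst (h : HasDerivWithinAt f f' s t) :
    HasDerivWithinAt (fun τ ↦ (f τ).1) f'.1 s t :=
  (hasFDerivAt_fst.comp_hasDerivWithinAt t h :)

theorem HasDerivWithinAt.snd (h : HasDerivWithinAt f f' s t) :
    HasDerivWithinAt (fun τ ↦ (f τ).2) f'.2 s t :=
  (hasFDerivAt_snd.comp_hasDerivWithinAt t h :)

theorem HasDerivAt.fst (h : HasDerivAt f f' t) : HasDerivAt (fun τ ↦ (f τ).1) f'.1 t :=
  (hasFDerivAt_fst.comp_hasDerivAt t h :)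

theorem HasDerivAt.snd (h : HasDerivAt f f' t) : HasDerivAt (fun τ ↦ (f τ).2) f'.2 t :=
  (hasFDerivAt_snd.comp_hasDerivAt t h :)

end ProdDeriv

section AutonomousODE

variable {E : Type*} [NormedAddCommGroup E] [NormedSpace ℝ E]

theorem IsIntegralCurveOn.hasDerivWithinAt_Ici {γ : ℝ → E} {v : ℝ → E → E} {a b t : ℝ}
    (hγ : IsIntegralCurveOn γ v (Icc a b)) (ht : t ∈ Ico a b) :
    HasDerivWithinAt γ (v t (γ t)) (Ici t) t :=
  (hγ t (Ico_subset_Icc_self ht)).mono_of_mem_nhdsWithin (Icc_mem_nhdsGE_of_mem ht)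

theorem IsIntegralCurveOn.piecewise_Icc {f g : ℝ → E} {v : ℝ → E → E} {a b c : ℝ}
    (hab : a ≤ b) (hbc : b ≤ c) (hf : IsIntegralCurveOn f v (Icc a b))
    (hg : IsIntegralCurveOn g v (Icc b c)) (hfg : f b = g b) :
    IsIntegralCurveOn (fun t ↦ if t ≤ b then f t else g t) v (Icc a c) := by
  set h := fun t ↦ if t ≤ b then f t else g t
  have hhf : EqOn h f (Icc a b) := fun t ht ↦ if_pos ht.2
  have hhg : EqOn h g (Icc b c) := fun t ht ↦ by
    rcases ht.1.eq_or_lt with rfl | hbt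
    · exact (if_pos le_rfl).trans hfg
    · exact if_neg hbt.not_ge
  have hleft : IsIntegralCurveOn h v (Icc a b) := fun t ht ↦ by
    simpa only [hhf ht] using (hf t ht).congr hhf (hhf ht)
  have hright : IsIntegralCurveOn h v (Icc b c) := fun t ht ↦ by
    simpa only [hhg ht] using (hg t ht).congr hhg (hhg ht)
  intro t ht
  rcases lt_trichotomy t b with htb | rfl | hbt
  · exact (hleft t ⟨ht.1, htb.le⟩).mono_of_mem_nhdsWithin
      (mem_nhdsWithin.2 ⟨Iio b, isOpen_Iio, htb, fun s hs ↦ ⟨hs.2.1, hs.1.le⟩⟩)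
  · rw [← Icc_union_Icc_eq_Icc hab hbc]
    exact (hleft t ⟨hab, le_rfl⟩).union (hright t ⟨le_rfl, hbc⟩)
  · exact (hright t ⟨hbt.le, ht.2⟩).mono_of_mem_nhdsWithin
      (mem_nhdsWithin.2 ⟨Ioi b, isOpen_Ioi, hbt, fun s hs ↦ ⟨hs.1.le, hs.2.2⟩⟩)

def AprioriBounded (G : E → E) (x₀ : E) : Prop :=
  ∀ T, ∃ R, ∀ f : ℝ → E, f 0 = x₀ → ∀ t ∈ Icc 0 T,
    IsIntegralCurveOn f (fun _ ↦ G) (Icc 0 t) → ‖f t‖ ≤ R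

variable [ProperSpace E] {G : E → E}

theorem LocallyLipschitz.exists_isIntegralCurveOn_Icc (hG : LocallyLipschitz G) (R : ℝ≥0) :
    ∃ ε > 0, ∀ (t₀ : ℝ) (x : E), ‖x‖ ≤ R →
      ∃ f : ℝ → E, f t₀ = x ∧ IsIntegralCurveOn f (fun _ ↦ G) (Icc (t₀ - ε) (t₀ + ε)) := by
  obtain ⟨K, hK⟩ := hG.exists_lipschitzOnWith_closedBall 0 (R + 1)
  obtain ⟨C, hC⟩ := (isCompact_closedBall (0 : E) (R + 1)).exists_bound_of_continuousOn
    hG.continuous.continuousOn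
  set L : ℝ≥0 := C.toNNReal + 1
  have hL : (0 : ℝ) < L := by positivity
  refine ⟨1 / L, by positivity, fun t₀ x hx ↦ ?_⟩
  have hpl : IsPicardLindelof (fun _ ↦ G) (tmin := t₀ - 1 / L) (tmax := t₀ + 1 / L)
      ⟨t₀, by constructor <;> linarith [one_div_pos.2 hL]⟩ 0 (R + 1) R L K :=
    { lipschitzOnWith := fun _ _ ↦ hK
      continuousOn := fun _ _ ↦ continuousOn_const
      norm_le := fun _ _ y hy ↦ (hC y hy).trans (by simp [L]; linarith [le_max_left C 0])
      mul_max_le := by simp [mul_inv_cancel₀ hL.ne'] }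
  obtain ⟨f, hf0, hf⟩ := hpl.exists_eq_forall_mem_Icc_hasDerivWithinAt (x := x) (by simpa using hx)
  exact ⟨f, hf0, hf⟩

theorem LocallyLipschitz.eqOn_of_isIntegralCurveOn_Icc (hG : LocallyLipschitz G) {f g : ℝ → E}
    {a b : ℝ} (hf : IsIntegralCurveOn f (fun _ ↦ G) (Icc a b))
    (hg : IsIntegralCurveOn g (fun _ ↦ G) (Icc a b)) (ha : f a = g a) : EqOn f g (Icc a b) := by
  obtain ⟨Cf, hCf⟩ := isCompact_Icc.exists_bound_of_continuousOn hf.continuousOn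
  obtain ⟨Cg, hCg⟩ := isCompact_Icc.exists_bound_of_continuousOn hg.continuousOn
  obtain ⟨K, hK⟩ := hG.exists_lipschitzOnWith_closedBall 0 (max Cf Cg)
  exact ODE_solution_unique_of_mem_Icc_right (fun _ _ ↦ hK) hf.continuousOn
    (fun _ ht ↦ hf.hasDerivWithinAt_Ici ht)
    (fun t ht ↦ mem_closedBall_zero_iff.2 ((hCf t (Ico_subset_Icc_self ht)).trans
      (le_max_left _ _)))
    hg.continuousOn (fun _ ht ↦ hg.hasDerivWithinAt_Ici ht)
    (fun t ht ↦ mem_closedBall_zero_iff.2 ((hCg t (Ico_subset_Icc_self ht)).trans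
      (le_max_right _ _)))
    ha

theorem LocallyLipschitz.exists_eqOn_isIntegralCurveOn_Icc (hG : LocallyLipschitz G) {x₀ : E}
    (hbound : AprioriBounded G x₀)
    {a : ℝ} (ha : a ≤ 0) {f₀ : ℝ → E} (hf₀ : IsIntegralCurveOn f₀ (fun _ ↦ G) (Icc a 0))
    (hf₀0 : f₀ 0 = x₀) {T : ℝ} (hT : 0 ≤ T) :
    ∃ f, EqOn f f₀ (Icc a 0) ∧ IsIntegralCurveOn f (fun _ ↦ G) (Icc a T) := by
  obtain ⟨R, hR⟩ := hbound T
  obtain ⟨ε, hε, hloc⟩ := hG.exists_isIntegralCurveOn_Icc R.toNNReal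
  -- Steps of uniform length `ε`: the a priori bound keeps every endpoint in the ball of radius `R`.
  have steps : ∀ n : ℕ, n * ε ≤ T + ε →
      ∃ f, EqOn f f₀ (Icc a 0) ∧ IsIntegralCurveOn f (fun _ ↦ G) (Icc a (n * ε)) := by
    intro n
    induction n with
    | zero => exact fun _ ↦ ⟨f₀, eqOn_refl _ _, by simpa using hf₀⟩
    | succ n ih =>
      intro hn
      push_cast at hn
      have hn0 : 0 ≤ n * ε := by positivity
      obtain ⟨f, hff₀, hf⟩ := ih (by linarith)
      have hfR := hR f ((hff₀ ⟨ha, le_rfl⟩).trans hf₀0) (n * ε) ⟨hn0, by linarith⟩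
        (hf.mono (Icc_subset_Icc_left ha))
      obtain ⟨g, hg0, hg⟩ := hloc (n * ε) (f (n * ε)) (hfR.trans (Real.le_coe_toNNReal R))
      refine ⟨fun t ↦ if t ≤ n * ε then f t else g t,
        fun t ht ↦ (if_pos (ht.2.trans hn0)).trans (hff₀ ht), ?_⟩
      push_cast
      rw [add_one_mul]
      exact hf.piecewise_Icc (ha.trans hn0) (by linarith)
        (hg.mono (Icc_subset_Icc_left (by linarith))) hg0.symm
  obtain ⟨f, hff₀, hf⟩ := steps ⌈T / ε⌉₊ (by
    have := mul_lt_mul_of_pos_right (Nat.ceil_lt_add_one (div_nonneg hT hε.le)) hε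
    rw [add_mul, div_mul_cancel₀ _ hε.ne', one_mul] at this
    exact this.le)
  refine ⟨f, hff₀, hf.mono (Icc_subset_Icc_right ?_)⟩
  rw [← div_le_iff₀ hε]
  exact Nat.le_ceil _

theorem LocallyLipschitz.exists_forall_hasDerivAt_of_aprioriBounded (hG : LocallyLipschitz G)
    {x₀ : E} (hbound : AprioriBounded G x₀) :
    ∃ u : ℝ → E, u 0 = x₀ ∧ ∀ t, 0 ≤ t → HasDerivAt u (G (u t)) t := by
  obtain ⟨ε, hε, hloc⟩ := hG.exists_isIntegralCurveOn_Icc ‖x₀‖₊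
  obtain ⟨f₀, hf₀0, hf₀⟩ := hloc 0 x₀ le_rfl
  -- Starting at time `-ε` makes the derivative at `t = 0` two-sided.
  have hε0 : -ε ≤ 0 := by linarith
  choose F hFf₀ hF using fun T : ℝ ↦ hG.exists_eqOn_isIntegralCurveOn_Icc hbound hε0
    (hf₀.mono (Icc_subset_Icc (by simp) (by simpa using hε.le))) hf₀0 (abs_nonneg T)
  -- All the `F T` start from `f₀ (-ε)` at time `-ε`, so they agree where they are all defined.
  have hagree : ∀ T T', EqOn (F T) (F T') (Icc (-ε) (min |T| |T'|)) := fun T T' ↦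
    hG.eqOn_of_isIntegralCurveOn_Icc ((hF T).mono (Icc_subset_Icc_right (min_le_left _ _)))
      ((hF T').mono (Icc_subset_Icc_right (min_le_right _ _)))
      ((hFf₀ T ⟨le_rfl, hε0⟩).trans (hFf₀ T' ⟨le_rfl, hε0⟩).symm)
  refine ⟨fun t ↦ F (t + 1) t, (hFf₀ _ ⟨hε0, le_rfl⟩).trans hf₀0, fun t ht ↦ ?_⟩
  have hD : HasDerivAt (F (t + 1)) (G (F (t + 1) t)) t :=
    (hF (t + 1) t ⟨by linarith, by linarith [le_abs_self (t + 1)]⟩).hasDerivAt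
      (Icc_mem_nhds (by linarith) (by linarith [le_abs_self (t + 1)]))
  refine hD.congr_of_eventuallyEq ?_
  filter_upwards [Ioo_mem_nhds (show -ε < t by linarith) (show t < t + 1 by linarith)] with s hs
  exact hagree (s + 1) (t + 1)
    ⟨hs.1.le, le_min (by linarith [le_abs_self (s + 1)]) (by linarith [hs.2, le_abs_self (t + 1)])⟩

end AutonomousODE

section ReactionSystem

-- With `c = id` this is the system of the theorem. Since `Real.rpow` takes junk values at negative
-- bases, the positivity argument is run for the clamp `c = max · 0` instead.
noncomputable def reactionField (δ η μ n k4 s : ℝ) (k1 k2 k3 c : ℝ → ℝ) (p : ℝ × ℝ × ℝ × ℝ) :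
    ℝ × ℝ × ℝ × ℝ :=
  (-(k1 p.2.1) * p.1 - δ * k3 p.2.2.1 * p.2.1 * c p.1 ^ δ + η * k4 * p.2.1 + s,
    μ * k3 p.2.2.1 * p.2.1 * c p.1 ^ δ - k4 * p.2.1,
    -(k2 p.2.1) * p.2.2.1,
    n * k1 p.2.1 * p.1 + k2 p.2.1 * p.2.2.1)

variable {δ η μ n k4 s : ℝ} {k1 k2 k3 : ℝ → ℝ}

theorem locallyLipschitz_reactionField {c : ℝ → ℝ} (hδ : 1 ≤ δ) (hk1 : LocallyLipschitz k1)
    (hk2 : LocallyLipschitz k2) (hk3 : LocallyLipschitz k3) (hc : LocallyLipschitz c) :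
    LocallyLipschitz (reactionField δ η μ n k4 s k1 k2 k3 c) := by
  have hpow : LocallyLipschitz fun x : ℝ ↦ x ^ δ :=
    (contDiff_rpow_const_of_le (n := 1) (by simpa using hδ)).locallyLipschitz
  have hx : LocallyLipschitz fun p : ℝ × ℝ × ℝ × ℝ ↦ p.1 := LipschitzWith.prod_fst.locallyLipschitz
  have hy : LocallyLipschitz fun p : ℝ × ℝ × ℝ × ℝ ↦ p.2.1 :=
    (LipschitzWith.prod_fst.comp LipschitzWith.prod_snd).locallyLipschitz
  have hz : LocallyLipschitz fun p : ℝ × ℝ × ℝ × ℝ ↦ p.2.2.1 :=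
    (LipschitzWith.prod_fst.comp
      (LipschitzWith.prod_snd.comp LipschitzWith.prod_snd)).locallyLipschitz
  -- The field is a polynomial in `p`, `k₁ y`, `k₂ y`, `k₃ z` and `(c x) ^ δ`.
  have hpoly : ContDiff ℝ 1 fun q : (ℝ × ℝ × ℝ × ℝ) × ℝ × ℝ × ℝ × ℝ ↦
      ((-q.2.1 * q.1.1 - δ * q.2.2.2.1 * q.1.2.1 * q.2.2.2.2 + η * k4 * q.1.2.1 + s,
        μ * q.2.2.2.1 * q.1.2.1 * q.2.2.2.2 - k4 * q.1.2.1,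
        -q.2.2.1 * q.1.2.2.1,
        n * q.2.1 * q.1.1 + q.2.2.1 * q.1.2.2.1) : ℝ × ℝ × ℝ × ℝ) := by
    fun_prop
  -- The product carries both the max metric and the normed-group metric; they agree by `rfl`.
  convert hpoly.locallyLipschitz.comp (LocallyLipschitz.id.prodMk ((hk1.comp hy).prodMk
    ((hk2.comp hy).prodMk ((hk3.comp hz).prodMk (hpow.comp (hc.comp hx)))))) using 1 <;> rfl

theorem nonneg_of_isIntegralCurveOn_reactionField (hδ : 0 < δ) (hη : 0 ≤ η) (hk4 : 0 ≤ k4)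
    (hs : 0 ≤ s) (hk1 : ∀ x, 0 ≤ k1 x) (hk2 : ∀ x, 0 ≤ k2 x) (hk3 : Continuous k3)
    {f : ℝ → ℝ × ℝ × ℝ × ℝ} {T : ℝ}
    (hf : IsIntegralCurveOn f (fun _ ↦ reactionField δ η μ n k4 s k1 k2 k3 (max · 0)) (Icc 0 T))
    (hx0 : 0 ≤ (f 0).1) (hy0 : 0 ≤ (f 0).2.1) (hz0 : 0 ≤ (f 0).2.2.1) :
    ∀ t ∈ Icc 0 T, 0 ≤ (f t).1 ∧ 0 ≤ (f t).2.1 ∧ 0 ≤ (f t).2.2.1 := by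
  have hcont := hf.continuousOn
  have hD := fun t (ht : t ∈ Ico 0 T) ↦ hf.hasDerivWithinAt_Ici ht
  have hz : ∀ t ∈ Icc 0 T, 0 ≤ (f t).2.2.1 :=
    image_nonneg_of_deriv_right_ge_mul_of_neg (C := 0) (by fun_prop)
      (fun t ht ↦ (hD t ht).snd.snd.fst) hz0
      (fun t _ hneg ↦ by
        simp only [reactionField, zero_mul]
        nlinarith [hk2 (f t).2.1])
  -- `y' = a y` with `a` continuous, hence bounded above on `[0, T]`.
  obtain ⟨C, hC⟩ := isCompact_Icc.exists_bound_of_continuousOn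
    (f := fun t ↦ μ * k3 (f t).2.2.1 * max (f t).1 0 ^ δ - k4) (by fun_prop (disch := positivity))
  have hy : ∀ t ∈ Icc 0 T, 0 ≤ (f t).2.1 :=
    image_nonneg_of_deriv_right_ge_mul_of_neg (C := C) (by fun_prop)
      (fun t ht ↦ (hD t ht).snd.fst) hy0
      (fun t ht hneg ↦ by
        have ha := (abs_le.1 (hC t (Ico_subset_Icc_self ht))).2
        simp only [reactionField]
        nlinarith)
  have hx : ∀ t ∈ Icc 0 T, 0 ≤ (f t).1 :=
    image_nonneg_of_deriv_right_ge_mul_of_neg (C := 0) (by fun_prop)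
      (fun t ht ↦ (hD t ht).fst) hx0
      (fun t ht hneg ↦ by
        simp only [reactionField, max_eq_right hneg.le, zero_rpow hδ.ne', zero_mul, mul_zero,
          sub_zero]
        nlinarith [mul_nonneg (hk1 (f t).2.1) (neg_nonneg.2 hneg.le),
          mul_nonneg (mul_nonneg hη hk4) (hy t (Ico_subset_Icc_self ht))])
  exact fun t ht ↦ ⟨hx t ht, hy t ht, hz t ht⟩

theorem energy_le_of_isIntegralCurveOn_reactionField {c : ℝ → ℝ} (hμ : 0 ≤ μ) (hk4 : 0 ≤ k4)
    (hδημ : η * μ ≤ δ) (hk1 : ∀ x, 0 ≤ k1 x) {f : ℝ → ℝ × ℝ × ℝ × ℝ} {T : ℝ}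
    (hf : IsIntegralCurveOn f (fun _ ↦ reactionField δ η μ n k4 s k1 k2 k3 c) (Icc 0 T))
    (hpos : ∀ t ∈ Icc 0 T, 0 ≤ (f t).1 ∧ 0 ≤ (f t).2.1) :
    ∀ t ∈ Icc 0 T, μ * (f t).1 + δ * (f t).2.1 ≤ μ * (f 0).1 + δ * (f 0).2.1 + μ * s * t := by
  have hcont := hf.continuousOn
  intro t ht
  -- The weights `μ, δ` cancel the reaction term `k₃ y x ^ δ`; what is left is `≤ μ s` as `η μ ≤ δ`.
  simpa using image_le_add_mul_of_deriv_right_le (f := fun τ ↦ μ * (f τ).1 + δ * (f τ).2.1)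
    (C := μ * s) (by fun_prop)
    (fun τ hτ ↦ ((hf.hasDerivWithinAt_Ici hτ).fst.const_mul μ).add
      ((hf.hasDerivWithinAt_Ici hτ).snd.fst.const_mul δ))
    (fun τ hτ ↦ by
      obtain ⟨hx, hy⟩ := hpos τ (Ico_subset_Icc_self hτ)
      simp only [reactionField]
      nlinarith [mul_nonneg (mul_nonneg hμ (hk1 (f τ).2.1)) hx,
        mul_nonneg (sub_nonneg.2 hδημ) (mul_nonneg hk4 hy)]) t ht

theorem third_le_of_isIntegralCurveOn_reactionField {c : ℝ → ℝ} (hk2 : ∀ x, 0 ≤ k2 x)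
    {f : ℝ → ℝ × ℝ × ℝ × ℝ} {T : ℝ}
    (hf : IsIntegralCurveOn f (fun _ ↦ reactionField δ η μ n k4 s k1 k2 k3 c) (Icc 0 T))
    (hz : ∀ t ∈ Icc 0 T, 0 ≤ (f t).2.2.1) : ∀ t ∈ Icc 0 T, (f t).2.2.1 ≤ (f 0).2.2.1 := by
  have hcont := hf.continuousOn
  intro t ht
  simpa using image_le_add_mul_of_deriv_right_le (C := 0) (by fun_prop)
    (fun τ hτ ↦ (hf.hasDerivWithinAt_Ici hτ).snd.snd.fst)
    (fun τ hτ ↦ by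
      simp only [reactionField]
      nlinarith [mul_nonneg (hk2 (f τ).2.1) (hz τ (Ico_subset_Icc_self hτ))]) t ht

theorem fourth_mem_Icc_of_isIntegralCurveOn_reactionField {c : ℝ → ℝ} (hn : 0 ≤ n)
    (hk1 : ∀ x, 0 ≤ k1 x) (hk2 : ∀ x, 0 ≤ k2 x) (hk1m : Monotone k1) (hk2m : Monotone k2)
    {f : ℝ → ℝ × ℝ × ℝ × ℝ} {T Bx By Bz : ℝ}
    (hf : IsIntegralCurveOn f (fun _ ↦ reactionField δ η μ n k4 s k1 k2 k3 c) (Icc 0 T))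
    (hB : ∀ t ∈ Icc 0 T, 0 ≤ (f t).1 ∧ (f t).1 ≤ Bx ∧ 0 ≤ (f t).2.1 ∧ (f t).2.1 ≤ By ∧
      0 ≤ (f t).2.2.1 ∧ (f t).2.2.1 ≤ Bz) :
    ∀ t ∈ Icc 0 T,
      (f t).2.2.2 ∈ Icc (f 0).2.2.2 ((f 0).2.2.2 + (n * k1 By * Bx + k2 By * Bz) * t) := by
  have hcont := hf.continuousOn
  have hD := fun τ (hτ : τ ∈ Ico 0 T) ↦ (hf.hasDerivWithinAt_Ici hτ).snd.snd.snd
  intro t ht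
  constructor
  · simpa using image_le_add_mul_of_deriv_right_le (C := 0) (by fun_prop)
      (fun τ hτ ↦ (hD τ hτ).neg)
      (fun τ hτ ↦ by
        obtain ⟨hx, -, hy, -, hz, -⟩ := hB τ (Ico_subset_Icc_self hτ)
        simp only [reactionField]
        nlinarith [mul_nonneg (mul_nonneg hn (hk1 (f τ).2.1)) hx,
          mul_nonneg (hk2 (f τ).2.1) hz]) t ht
  · simpa using image_le_add_mul_of_deriv_right_le (C := n * k1 By * Bx + k2 By * Bz)
      (by fun_prop) hD
      (fun τ hτ ↦ by
        obtain ⟨hx, hxB, hy, hyB, hz, hzB⟩ := hB τ (Ico_subset_Icc_self hτ)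
        exact add_le_add (mul_le_mul (mul_le_mul_of_nonneg_left (hk1m hyB) hn) hxB hx
          (mul_nonneg hn (hk1 _))) (mul_le_mul (hk2m hyB) hzB hz (hk2 _))) t ht

theorem aprioriBounded_reactionField (hδ : 0 < δ) (hη : 0 ≤ η) (hμ : 0 < μ) (hn : 0 ≤ n)
    (hk4 : 0 ≤ k4) (hs : 0 ≤ s) (hδημ : η * μ ≤ δ) (hk1 : ∀ x, 0 ≤ k1 x) (hk2 : ∀ x, 0 ≤ k2 x)
    (hk1m : Monotone k1) (hk2m : Monotone k2) (hk3 : Continuous k3) {x₀ : ℝ × ℝ × ℝ × ℝ}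
    (hx₀ : 0 ≤ x₀.1 ∧ 0 ≤ x₀.2.1 ∧ 0 ≤ x₀.2.2.1) :
    AprioriBounded (reactionField δ η μ n k4 s k1 k2 k3 (max · 0)) x₀ := by
  intro T
  set B := μ * x₀.1 + δ * x₀.2.1 + μ * s * T
  set C := n * k1 (B / δ) * (B / μ) + k2 (B / δ) * x₀.2.2.1
  refine ⟨max (B / μ) (max (B / δ) (max x₀.2.2.1 (|x₀.2.2.2| + C * T))),
    fun f hf0 t ht hf ↦ ?_⟩
  subst hf0
  have hpos := nonneg_of_isIntegralCurveOn_reactionField hδ hη hk4 hs hk1 hk2 hk3 hf hx₀.1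
    hx₀.2.1 hx₀.2.2
  have hE := energy_le_of_isIntegralCurveOn_reactionField hμ.le hk4 hδημ hk1 hf
    (fun τ hτ ↦ ⟨(hpos τ hτ).1, (hpos τ hτ).2.1⟩)
  have hz := third_le_of_isIntegralCurveOn_reactionField hk2 hf (fun τ hτ ↦ (hpos τ hτ).2.2)
  have hB : ∀ τ ∈ Icc 0 t, 0 ≤ (f τ).1 ∧ (f τ).1 ≤ B / μ ∧ 0 ≤ (f τ).2.1 ∧
      (f τ).2.1 ≤ B / δ ∧ 0 ≤ (f τ).2.2.1 ∧ (f τ).2.2.1 ≤ (f 0).2.2.1 := by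
    intro τ hτ
    obtain ⟨hx, hy, hz0⟩ := hpos τ hτ
    have hEτ : μ * (f τ).1 + δ * (f τ).2.1 ≤ B := by
      nlinarith [hE τ hτ, mul_le_mul_of_nonneg_left (hτ.2.trans ht.2) (mul_nonneg hμ.le hs)]
    refine ⟨hx, (le_div_iff₀ hμ).2 ?_, hy, (le_div_iff₀ hδ).2 ?_, hz0, hz τ hτ⟩ <;> nlinarith
  have hw := fourth_mem_Icc_of_isIntegralCurveOn_reactionField hn hk1 hk2 hk1m hk2m hf hB t
    ⟨ht.1, le_rfl⟩
  obtain ⟨hx, hxB, hy, hyB, hz0, hzB⟩ := hB t ⟨ht.1, le_rfl⟩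
  have hC : 0 ≤ C := add_nonneg (mul_nonneg (mul_nonneg hn (hk1 _)) (hx.trans hxB))
    (mul_nonneg (hk2 _) hx₀.2.2)
  simp only [norm_prod_le_iff, Real.norm_eq_abs]
  refine ⟨?_, ?_, ?_, ?_⟩
  · rw [abs_of_nonneg hx]
    exact hxB.trans (le_max_left _ _)
  · rw [abs_of_nonneg hy]
    exact hyB.trans (le_max_of_le_right (le_max_left _ _))
  · rw [abs_of_nonneg hz0]
    exact hzB.trans (le_max_of_le_right (le_max_of_le_right (le_max_left _ _)))
  · refine le_max_of_le_right (le_max_of_le_right (le_max_of_le_right (abs_le.2 ⟨?_, ?_⟩)))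
    · nlinarith [neg_abs_le (f 0).2.2.2, hw.1, mul_nonneg hC (ht.1.trans ht.2)]
    · nlinarith [le_abs_self (f 0).2.2.2, hw.2, mul_le_mul_of_nonneg_left ht.2 hC]

theorem exists_forall_hasDerivAt_reactionField (hδ : 1 ≤ δ) (hη : 0 ≤ η) (hμ : 0 < μ)
    (hn : 0 ≤ n) (hk4 : 0 ≤ k4) (hs : 0 ≤ s) (hδημ : η * μ ≤ δ) (hk1 : ∀ x, 0 ≤ k1 x)
    (hk2 : ∀ x, 0 ≤ k2 x) (hk1m : Monotone k1) (hk2m : Monotone k2) (hk1l : LocallyLipschitz k1)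
    (hk2l : LocallyLipschitz k2) (hk3l : LocallyLipschitz k3) {x₀ : ℝ × ℝ × ℝ × ℝ}
    (hx₀ : 0 ≤ x₀.1 ∧ 0 ≤ x₀.2.1 ∧ 0 ≤ x₀.2.2.1) :
    ∃ u : ℝ → ℝ × ℝ × ℝ × ℝ, u 0 = x₀ ∧
      ∀ t, 0 ≤ t → HasDerivAt u (reactionField δ η μ n k4 s k1 k2 k3 id (u t)) t := by
  obtain ⟨u, hu0, hu⟩ := (locallyLipschitz_reactionField hδ hk1l hk2l hk3l
    (LocallyLipschitz.id.max_const 0)).exists_forall_hasDerivAt_of_aprioriBounded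
    (aprioriBounded_reactionField (by linarith) hη hμ hn hk4 hs hδημ hk1 hk2 hk1m hk2m
      hk3l.continuous hx₀)
  refine ⟨u, hu0, fun t ht ↦ ?_⟩
  have hpos := nonneg_of_isIntegralCurveOn_reactionField (T := t) (by linarith) hη hk4 hs hk1 hk2
    hk3l.continuous (fun τ hτ ↦ (hu τ hτ.1).hasDerivWithinAt) (hu0 ▸ hx₀.1) (hu0 ▸ hx₀.2.1)
    (hu0 ▸ hx₀.2.2) t ⟨ht, le_rfl⟩
  have hclamp : reactionField δ η μ n k4 s k1 k2 k3 (max · 0) (u t) =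
      reactionField δ η μ n k4 s k1 k2 k3 id (u t) := by
    simp only [reactionField, max_eq_left hpos.1, id]
  exact hclamp ▸ hu t ht

end ReactionSystem

theorem stmt_6_general
    (δ η μ n k4 s : ℝ)
    (hδ : 1 ≤ δ) (hη : 0 < η) (hμ : 0 < μ) (hn : 0 < n) (hk4 : 0 < k4) (hs : 0 ≤ s)
    (hδημ : η * μ ≤ δ)
    (k1 k2 k3 : ℝ → ℝ)
    (hk1pos : ∀ x, 0 < k1 x) (hk2pos : ∀ x, 0 < k2 x)
    (hk1lip : ∃ K, LipschitzWith K k1) (hk2lip : ∃ K, LipschitzWith K k2)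
    (hk3lip : ∃ K, LipschitzWith K k3)
    (hk1mono : StrictMono k1) (hk2mono : StrictMono k2)
    (a1 a2 a3 a4 : ℝ) (ha1 : 0 ≤ a1) (ha2 : 0 ≤ a2) (ha3 : 0 ≤ a3) :
    ∃ u1 u2 u3 u4 : ℝ → ℝ,
      u1 0 = a1 ∧ u2 0 = a2 ∧ u3 0 = a3 ∧ u4 0 = a4 ∧
      (∀ t, 0 ≤ t → HasDerivAt u1
        (-(k1 (u2 t)) * u1 t - δ * k3 (u3 t) * u2 t * (u1 t) ^ δ + η * k4 * u2 t + s) t) ∧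
      (∀ t, 0 ≤ t → HasDerivAt u2
        (μ * k3 (u3 t) * u2 t * (u1 t) ^ δ - k4 * u2 t) t) ∧
      (∀ t, 0 ≤ t → HasDerivAt u3 (-(k2 (u2 t)) * u3 t) t) ∧
      (∀ t, 0 ≤ t → HasDerivAt u4 (n * k1 (u2 t) * u1 t + k2 (u2 t) * u3 t) t) ∧
      (∀ v1 v2 v3 v4 : ℝ → ℝ,
        v1 0 = a1 → v2 0 = a2 → v3 0 = a3 → v4 0 = a4 →
        (∀ t, 0 ≤ t → HasDerivAt v1
          (-(k1 (v2 t)) * v1 t - δ * k3 (v3 t) * v2 t * (v1 t) ^ δ + η * k4 * v2 t + s) t) →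
        (∀ t, 0 ≤ t → HasDerivAt v2
          (μ * k3 (v3 t) * v2 t * (v1 t) ^ δ - k4 * v2 t) t) →
        (∀ t, 0 ≤ t → HasDerivAt v3 (-(k2 (v2 t)) * v3 t) t) →
        (∀ t, 0 ≤ t → HasDerivAt v4 (n * k1 (v2 t) * v1 t + k2 (v2 t) * v3 t) t) →
        ∀ t, 0 ≤ t → v1 t = u1 t ∧ v2 t = u2 t ∧ v3 t = u3 t ∧ v4 t = u4 t) := by
  obtain ⟨K1, hK1⟩ := hk1lip
  obtain ⟨K2, hK2⟩ := hk2lip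
  obtain ⟨K3, hK3⟩ := hk3lip
  obtain ⟨u, hu0, hu⟩ := exists_forall_hasDerivAt_reactionField hδ hη.le hμ hn.le hk4.le hs hδημ
    (fun x ↦ (hk1pos x).le) (fun x ↦ (hk2pos x).le) hk1mono.monotone hk2mono.monotone
    hK1.locallyLipschitz hK2.locallyLipschitz hK3.locallyLipschitz (x₀ := (a1, a2, a3, a4))
    ⟨ha1, ha2, ha3⟩
  refine ⟨fun t ↦ (u t).1, fun t ↦ (u t).2.1, fun t ↦ (u t).2.2.1, fun t ↦ (u t).2.2.2,
    by simp [hu0], by simp [hu0], by simp [hu0], by simp [hu0], fun t ht ↦ (hu t ht).fst,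
    fun t ht ↦ (hu t ht).snd.fst, fun t ht ↦ (hu t ht).snd.snd.fst,
    fun t ht ↦ (hu t ht).snd.snd.snd, ?_⟩
  intro v1 v2 v3 v4 h1 h2 h3 h4 hv1 hv2 hv3 hv4 t ht
  have hv : IsIntegralCurveOn (fun τ ↦ (v1 τ, v2 τ, v3 τ, v4 τ))
      (fun _ ↦ reactionField δ η μ n k4 s k1 k2 k3 id) (Icc 0 t) := fun τ hτ ↦
    ((hv1 τ hτ.1).prodMk ((hv2 τ hτ.1).prodMk ((hv3 τ hτ.1).prodMk (hv4 τ hτ.1)))).hasDerivWithinAt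
  have heq := (locallyLipschitz_reactionField hδ hK1.locallyLipschitz hK2.locallyLipschitz
    hK3.locallyLipschitz LocallyLipschitz.id).eqOn_of_isIntegralCurveOn_Icc hv
    (fun τ hτ ↦ (hu τ hτ.1).hasDerivWithinAt) (by simp [hu0, h1, h2, h3, h4]) ⟨ht, le_rfl⟩
  simpa only [Prod.ext_iff] using heq

/-- Global solvability. Under δ ≥ 1, δ ≥ ημ, positivity, Lipschitz and
monotonicity assumptions on the reaction constants, for any nonnegative initial data
the system has a unique global classical solution on [0,∞). -/
theorem stmt_6
    (δ η μ n k4 s : ℝ)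
    (hδ : 1 ≤ δ) (hη : 0 < η) (hμ : 0 < μ) (hn : 0 < n) (hk4 : 0 < k4) (hs : 0 ≤ s)
    (hδημ : η * μ ≤ δ)
    (k1 k2 k3 : ℝ → ℝ)
    (hk1pos : ∀ x, 0 < k1 x) (hk2pos : ∀ x, 0 < k2 x) (hk3pos : ∀ x, 0 < k3 x)
    (hk1lip : ∃ K, LipschitzWith K k1) (hk2lip : ∃ K, LipschitzWith K k2)
    (hk3lip : ∃ K, LipschitzWith K k3)
    (hk1mono : StrictMono k1) (hk2mono : StrictMono k2) (hk3mono : StrictMono k3)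
    (a1 a2 a3 a4 : ℝ) (ha1 : 0 ≤ a1) (ha2 : 0 ≤ a2) (ha3 : 0 ≤ a3) (ha4 : 0 ≤ a4) :
    ∃ u1 u2 u3 u4 : ℝ → ℝ,
      u1 0 = a1 ∧ u2 0 = a2 ∧ u3 0 = a3 ∧ u4 0 = a4 ∧
      (∀ t, 0 ≤ t → HasDerivAt u1
        (-(k1 (u2 t)) * u1 t - δ * k3 (u3 t) * u2 t * (u1 t) ^ δ + η * k4 * u2 t + s) t) ∧
      (∀ t, 0 ≤ t → HasDerivAt u2
        (μ * k3 (u3 t) * u2 t * (u1 t) ^ δ - k4 * u2 t) t) ∧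
      (∀ t, 0 ≤ t → HasDerivAt u3 (-(k2 (u2 t)) * u3 t) t) ∧
      (∀ t, 0 ≤ t → HasDerivAt u4 (n * k1 (u2 t) * u1 t + k2 (u2 t) * u3 t) t) ∧
      (∀ v1 v2 v3 v4 : ℝ → ℝ,
        v1 0 = a1 → v2 0 = a2 → v3 0 = a3 → v4 0 = a4 →
        (∀ t, 0 ≤ t → HasDerivAt v1
          (-(k1 (v2 t)) * v1 t - δ * k3 (v3 t) * v2 t * (v1 t) ^ δ + η * k4 * v2 t + s) t) →
        (∀ t, 0 ≤ t → HasDerivAt v2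
          (μ * k3 (v3 t) * v2 t * (v1 t) ^ δ - k4 * v2 t) t) →
        (∀ t, 0 ≤ t → HasDerivAt v3 (-(k2 (v2 t)) * v3 t) t) →
        (∀ t, 0 ≤ t → HasDerivAt v4 (n * k1 (v2 t) * v1 t + k2 (v2 t) * v3 t) t) →
        ∀ t, 0 ≤ t → v1 t = u1 t ∧ v2 t = u2 t ∧ v3 t = u3 t ∧ v4 t = u4 t) :=
  stmt_6_general δ η μ n k4 s hδ hη hμ hn hk4 hs hδημ k1 k2 k3 hk1pos hk2pos hk1lip hk2lip hk3lip
    hk1mono hk2mono a1 a2 a3 a4 ha1 ha2 ha3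
end

section
/- Let U_1 = (k_4/(μ k_3(0)))^{1/δ}. If s ≤ k_1(0) U_1, the only equilibrium of the reduced 3-dimensional system in the nonnegative orthant is (s/k_1(0), 0, 0); if s > k_1(0) U_1 and δ - ημ > 0, there exists exactly one additional equilibrium (U_1, u_2*, 0) with u_2* > 0 solving 0 = -k_1(u_2*) U_1 - (k_4/μ)(δ - ημ) u_2* + s. -/
/-!
The third equation forces `u₃ = 0`, and the second factors as `u₂ (μ k₃(0) u₁^δ - k₄) = 0`.
So either `u₂ = 0`, and the first equation gives `u₁ = s / k₁(0)`, or `u₁ = U₁`, and then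
`μ k₃(0) U₁^δ = k₄` turns the first equation into `k₁(u₂) U₁ + c u₂ = s` with
`c = (k₄/μ)(δ - ημ) > 0`. The left side is continuous and strictly increasing in `u₂`, so it has
a positive root exactly when its value `k₁(0) U₁` at `0` is below `s`, and that root is unique.
-/

open Set

lemma lt_of_pos_of_add_mul_eq {f : ℝ → ℝ} (hf : Monotone f) {c s v : ℝ} (hc : 0 < c)
    (hv : 0 < v) (h : f v + c * v = s) : f 0 < s := by
  linarith [hf hv.le, mul_pos hc hv]

lemma existsUnique_pos_add_mul_eq {f : ℝ → ℝ} (hf : Monotone f) (hfc : Continuous f)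
    {c s : ℝ} (hc : 0 < c) (hs : f 0 < s) : ∃! v, 0 < v ∧ f v + c * v = s := by
  have hstrict : StrictMono fun v => f v + c * v :=
    hf.add_strictMono (strictMono_mul_left_of_pos hc)
  set B := (s - f 0) / c
  have hB : 0 ≤ B := div_nonneg (by linarith) hc.le
  -- At `B` the linear part alone already reaches `s - f 0`.
  have hfB : s ≤ f B + c * B := by
    have := hf hB
    rw [mul_div_cancel₀ _ hc.ne']
    linarith
  obtain ⟨v, hvB, hv⟩ : s ∈ (fun v => f v + c * v) '' Icc 0 B :=
    intermediate_value_Icc hB (by fun_prop) ⟨by simpa using hs.le, hfB⟩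
  have hv0 : 0 < v := hvB.1.lt_of_ne (by rintro rfl; simp at hv; linarith)
  exact ⟨v, ⟨hv0, hv⟩, fun w hw => hstrict.injective (hw.2.trans hv.symm)⟩

def ReducedEquilibrium (δ η μ k4 s : ℝ) (k1 k2 k3 : ℝ → ℝ) (u1 u2 u3 : ℝ) : Prop :=
  -(k1 u2) * u1 - δ * k3 u3 * u2 * u1 ^ δ + η * k4 * u2 + s = 0 ∧
    μ * k3 u3 * u2 * u1 ^ δ - k4 * u2 = 0 ∧
    -(k2 u2) * u3 = 0

namespace ReducedEquilibrium

variable {δ η μ k4 s : ℝ} {k1 k2 k3 : ℝ → ℝ} {u1 u2 u3 : ℝ}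

lemma third_eq_zero (hk2 : 0 < k2 u2) (h : ReducedEquilibrium δ η μ k4 s k1 k2 k3 u1 u2 u3) :
    u3 = 0 := by
  simpa [hk2.ne'] using h.2.2

lemma first_eq_div_of_second_eq_zero (hk1 : 0 < k1 0)
    (h : ReducedEquilibrium δ η μ k4 s k1 k2 k3 u1 0 u3) : u1 = s / k1 0 := by
  rw [eq_div_iff hk1.ne']
  linarith [h.1]

lemma first_eq_of_second_pos {U : ℝ} (hδ : δ ≠ 0) (hμ : 0 < μ) (hk3 : 0 < k3 0)
    (hu1 : 0 ≤ u1) (hU : 0 ≤ U) (hUδ : μ * k3 0 * U ^ δ = k4) (hu2 : 0 < u2)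
    (h : ReducedEquilibrium δ η μ k4 s k1 k2 k3 u1 u2 0) : u1 = U := by
  have hthreshold : μ * k3 0 * u1 ^ δ = k4 := by
    have : u2 * (μ * k3 0 * u1 ^ δ - k4) = 0 := by linear_combination h.2.1
    linarith [(mul_eq_zero.1 this).resolve_left hu2.ne']
  rw [← Real.rpow_left_inj hu1 hU hδ]
  exact mul_left_cancel₀ (mul_pos hμ hk3).ne' (hthreshold.trans hUδ.symm)

lemma iff_at_threshold {U v : ℝ} (hμ : μ ≠ 0) (hUδ : μ * k3 0 * U ^ δ = k4) :
    ReducedEquilibrium δ η μ k4 s k1 k2 k3 U v 0 ↔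
      k1 v * U + k4 / μ * (δ - η * μ) * v = s := by
  have hfirst : -k1 v * U - δ * k3 0 * v * U ^ δ + η * k4 * v + s =
      -k1 v * U - k4 / μ * (δ - η * μ) * v + s := by
    rw [← hUδ]
    field_simp
    ring
  have hsecond : μ * k3 0 * v * U ^ δ - k4 * v = 0 := by linear_combination v * hUδ
  rw [ReducedEquilibrium, hfirst]
  exact ⟨fun ⟨h, _⟩ => by linarith, fun h => ⟨by linarith, hsecond, by ring⟩⟩

end ReducedEquilibrium

theorem stmt_8_general
    (δ η μ k4 s : ℝ)
    (hδ : 1 ≤ δ) (hμ : 0 < μ) (hk4 : 0 < k4)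
    (hδημ : η * μ < δ)
    (k1 k2 k3 : ℝ → ℝ)
    (hk1pos : ∀ x, 0 < k1 x) (hk2pos : ∀ x, 0 < k2 x) (hk3pos : ∀ x, 0 < k3 x)
    (hk1lip : ∃ K, LipschitzWith K k1)
    (hk1mono : StrictMono k1)
    (U1 : ℝ) (hU1 : U1 = (k4 / (μ * k3 0)) ^ (1/δ))
    (IsEquilibrium : ℝ → ℝ → ℝ → Prop)
    (hEq : ∀ u1 u2 u3, IsEquilibrium u1 u2 u3 ↔
      (-(k1 u2) * u1 - δ * k3 u3 * u2 * u1 ^ δ + η * k4 * u2 + s = 0 ∧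
       μ * k3 u3 * u2 * u1 ^ δ - k4 * u2 = 0 ∧
       -(k2 u2) * u3 = 0)) :
    (s ≤ k1 0 * U1 →
      ∀ u1 u2 u3 : ℝ, 0 ≤ u1 → 0 ≤ u2 → 0 ≤ u3 → IsEquilibrium u1 u2 u3 →
        u1 = s / k1 0 ∧ u2 = 0 ∧ u3 = 0) ∧
    (k1 0 * U1 < s →
      ∃! v : ℝ, 0 < v ∧ 0 = -(k1 v) * U1 - (k4 / μ) * (δ - η * μ) * v + s ∧
        IsEquilibrium U1 v 0) := by
  have hEq' u1 u2 u3 :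
      IsEquilibrium u1 u2 u3 ↔ ReducedEquilibrium δ η μ k4 s k1 k2 k3 u1 u2 u3 := hEq u1 u2 u3
  have hδ0 : δ ≠ 0 := by positivity
  have hbase : 0 < k4 / (μ * k3 0) := div_pos hk4 (mul_pos hμ (hk3pos 0))
  have hU1pos : 0 < U1 := hU1 ▸ Real.rpow_pos_of_pos hbase _
  have hU1δ : μ * k3 0 * U1 ^ δ = k4 := by
    rw [hU1, one_div, Real.rpow_inv_rpow hbase.le hδ0]
    field_simp [(hk3pos 0).ne']
  have hc : 0 < k4 / μ * (δ - η * μ) := mul_pos (div_pos hk4 hμ) (by linarith)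
  have hf : Monotone fun v => k1 v * U1 := fun a b hab =>
    mul_le_mul_of_nonneg_right (hk1mono.monotone hab) hU1pos.le
  have hreduced v : ReducedEquilibrium δ η μ k4 s k1 k2 k3 U1 v 0 ↔ _ :=
    ReducedEquilibrium.iff_at_threshold hμ.ne' hU1δ
  refine ⟨fun hsle u1 u2 u3 hu1 hu2 _ heq => ?_, fun hlt => ?_⟩
  · rw [hEq'] at heq
    obtain rfl := heq.third_eq_zero (hk2pos u2)
    obtain rfl | hu2 := hu2.eq_or_lt
    · exact ⟨heq.first_eq_div_of_second_eq_zero (hk1pos 0), rfl, rfl⟩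
    · obtain rfl := heq.first_eq_of_second_pos hδ0 hμ (hk3pos 0) hu1 hU1pos.le hU1δ hu2
      exact absurd hsle (not_le.2 (lt_of_pos_of_add_mul_eq hf hc hu2 ((hreduced u2).1 heq)))
  · obtain ⟨K, hK⟩ := hk1lip
    have hroot := existsUnique_pos_add_mul_eq hf (hK.continuous.mul continuous_const) hc hlt
    refine (existsUnique_congr fun v => ?_).1 hroot
    rw [hEq', hreduced]
    exact ⟨fun ⟨hv, h⟩ => ⟨hv, by linarith, h⟩, fun ⟨hv, _, h⟩ => ⟨hv, h⟩⟩

/-- With U_1 = (k_4/(μ k_3(0)))^{1/δ}: if s ≤ k_1(0) U_1 the only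
nonnegative equilibrium of the reduced system is (s/k_1(0), 0, 0); if s > k_1(0) U_1
(and δ > ημ) there is exactly one additional equilibrium (U_1, u_2*, 0) with
u_2* > 0 solving 0 = -k_1(u_2*) U_1 - (k_4/μ)(δ - ημ) u_2* + s. -/
theorem stmt_8
    (δ η μ k4 s : ℝ)
    (hδ : 1 ≤ δ) (hη : 0 < η) (hμ : 0 < μ) (hk4 : 0 < k4) (hs : 0 ≤ s)
    (hδημ : η * μ < δ)
    (k1 k2 k3 : ℝ → ℝ)
    (hk1pos : ∀ x, 0 < k1 x) (hk2pos : ∀ x, 0 < k2 x) (hk3pos : ∀ x, 0 < k3 x)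
    (hk1lip : ∃ K, LipschitzWith K k1) (hk3lip : ∃ K, LipschitzWith K k3)
    (hk1mono : StrictMono k1) (hk3mono : StrictMono k3)
    (U1 : ℝ) (hU1 : U1 = (k4 / (μ * k3 0)) ^ (1/δ))
    (IsEquilibrium : ℝ → ℝ → ℝ → Prop)
    (hEq : ∀ u1 u2 u3, IsEquilibrium u1 u2 u3 ↔
      (-(k1 u2) * u1 - δ * k3 u3 * u2 * u1 ^ δ + η * k4 * u2 + s = 0 ∧
       μ * k3 u3 * u2 * u1 ^ δ - k4 * u2 = 0 ∧
       -(k2 u2) * u3 = 0)) :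
    (s ≤ k1 0 * U1 →
      ∀ u1 u2 u3 : ℝ, 0 ≤ u1 → 0 ≤ u2 → 0 ≤ u3 → IsEquilibrium u1 u2 u3 →
        u1 = s / k1 0 ∧ u2 = 0 ∧ u3 = 0) ∧
    (k1 0 * U1 < s →
      ∃! v : ℝ, 0 < v ∧ 0 = -(k1 v) * U1 - (k4 / μ) * (δ - η * μ) * v + s ∧
        IsEquilibrium U1 v 0) :=
  stmt_8_general δ η μ k4 s hδ hμ hk4 hδημ k1 k2 k3 hk1pos hk2pos hk3pos hk1lip hk1mono U1 hU1
    IsEquilibrium hEq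
end

section
/- The Jacobian of the reduced system at the equilibrium (s/k_1(0), 0, 0) is upper triangular with diagonal entries -k_1(0), μ k_3(0) (s/k_1(0))^δ - k_4, and -k_2(0); hence this equilibrium is asymptotically stable if s < k_1(0) (k_4/(μ k_3(0)))^{1/δ} and unstable if s > k_1(0) (k_4/(μ k_3(0)))^{1/δ}. -/
/-!
Along the coordinate line through `(a, 0, 0)` in the direction `u_j`, every component `u_i'`
with `i > j` of the field vanishes identically (`u_2'` carries the factor `u_2`, `u_3'` the
factor `u_3`), so the Jacobian there is upper triangular and its diagonal is read off from
one-variable derivatives. With `a = s / k_1(0)`, the middle entry `μ k_3(0) a^δ - k_4` changes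
sign exactly when `s` crosses `k_1(0) (k_4 / (μ k_3(0)))^{1/δ}`, by monotonicity of `x ↦ x^δ`.
-/

lemma mul_div_rpow_sub_neg_iff {k m c s δ : ℝ} (hk : 0 < k) (hm : 0 < m) (hc : 0 ≤ c)
    (hs : 0 ≤ s) (hδ : 0 < δ) :
    m * (s / k) ^ δ - c < 0 ↔ s < k * (c / m) ^ (1 / δ) := by
  rw [sub_neg, ← lt_div_iff₀' hm, ← div_lt_iff₀' hk, one_div,
    Real.lt_rpow_inv_iff_of_pos (by positivity) (by positivity) hδ]

lemma sub_pos_mul_div_rpow_iff {k m c s δ : ℝ} (hk : 0 < k) (hm : 0 < m) (hc : 0 ≤ c)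
    (hs : 0 ≤ s) (hδ : 0 < δ) :
    0 < m * (s / k) ^ δ - c ↔ k * (c / m) ^ (1 / δ) < s := by
  rw [sub_pos, ← div_lt_iff₀' hm, ← lt_div_iff₀' hk, one_div,
    Real.rpow_inv_lt_iff_of_pos (by positivity) (by positivity) hδ]

theorem fderiv_apply_single_eq_deriv_update {𝕜 ι F : Type*} [NontriviallyNormedField 𝕜]
    [Fintype ι] [DecidableEq ι] [NormedAddCommGroup F] [NormedSpace 𝕜 F]
    {f : (ι → 𝕜) → F} {p : ι → 𝕜} (hf : DifferentiableAt 𝕜 f p) (j : ι) :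
    fderiv 𝕜 f p (Pi.single j 1) = deriv (fun t => f (Function.update p j t)) (p j) := by
  rw [← Function.update_eq_self j p] at hf
  have h := hf.hasFDerivAt.comp_hasDerivAt (p j) (hasDerivAt_update p j (p j))
  rw [Function.update_eq_self] at h
  exact h.deriv.symm

noncomputable def reducedField (δ η μ k4 s : ℝ) (k1 k2 k3 : ℝ → ℝ) (x : Fin 3 → ℝ) :
    Fin 3 → ℝ :=
  ![-(k1 (x 1)) * x 0 - δ * k3 (x 2) * x 1 * x 0 ^ δ + η * k4 * x 1 + s,
    μ * k3 (x 2) * x 1 * x 0 ^ δ - k4 * x 1,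
    -(k2 (x 1)) * x 2]

section reducedField

variable {δ η μ k4 s : ℝ} {k1 k2 k3 : ℝ → ℝ}

theorem differentiable_reducedField_apply (hδ : 1 ≤ δ) (hk1 : Differentiable ℝ k1)
    (hk2 : Differentiable ℝ k2) (hk3 : Differentiable ℝ k3) (i : Fin 3) :
    Differentiable ℝ fun x => reducedField δ η μ k4 s k1 k2 k3 x i := by
  fin_cases i <;>
    simp only [reducedField, Fin.zero_eta, Fin.mk_one, Fin.reduceFinMk, Matrix.cons_val_zero,
      Matrix.cons_val_one, Matrix.cons_val] <;>
    fun_prop (disch := exact fun _ => Or.inr hδ)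

variable (δ η μ k4 s k1 k2 k3)

theorem reducedField_update_zero (a t : ℝ) :
    reducedField δ η μ k4 s k1 k2 k3 (Function.update ![a, 0, 0] 0 t) =
      ![-(k1 0) * t + s, 0, 0] := by
  ext i; fin_cases i <;> simp [reducedField]

theorem reducedField_update_one (a t : ℝ) :
    reducedField δ η μ k4 s k1 k2 k3 (Function.update ![a, 0, 0] 1 t) =
      ![-(k1 t) * a - δ * k3 0 * t * a ^ δ + η * k4 * t + s,
        (μ * k3 0 * a ^ δ - k4) * t, 0] := by
  ext i; fin_cases i <;> simp [reducedField]; ring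

theorem reducedField_update_two (a t : ℝ) :
    reducedField δ η μ k4 s k1 k2 k3 (Function.update ![a, 0, 0] 2 t) =
      ![-(k1 0) * a + s, 0, -(k2 0) * t] := by
  ext i; fin_cases i <;> simp [reducedField]

theorem jacobian_reducedField (hδ : 1 ≤ δ) {k1' : ℝ → ℝ}
    (hk1 : ∀ x, HasDerivAt k1 (k1' x) x) (hk2 : Differentiable ℝ k2)
    (hk3 : Differentiable ℝ k3) (a : ℝ) :
    Matrix.of (fun i j => fderiv ℝ (fun x => reducedField δ η μ k4 s k1 k2 k3 x i) ![a, 0, 0]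
        (Pi.single j 1)) =
      !![-(k1 0), -(k1' 0) * a - δ * k3 0 * a ^ δ + η * k4, 0;
         0, μ * k3 0 * a ^ δ - k4, 0;
         0, 0, -(k2 0)] := by
  have hk1d : Differentiable ℝ k1 := fun x => (hk1 x).differentiableAt
  ext i j
  rw [Matrix.of_apply, fderiv_apply_single_eq_deriv_update
    ((differentiable_reducedField_apply hδ hk1d hk2 hk3 i).differentiableAt)]
  fin_cases j
  · fin_cases i <;> simp [reducedField_update_zero]
  · fin_cases i
    · have h : HasDerivAt
          (fun t => reducedField δ η μ k4 s k1 k2 k3 (Function.update ![a, 0, 0] 1 t) 0)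
          (-(k1' 0) * a - δ * k3 0 * a ^ δ + η * k4) 0 := by
        simp only [reducedField_update_one, Matrix.cons_val_zero]
        simpa using ((((hk1 0).neg.mul_const a).sub
          (((hasDerivAt_id 0).const_mul (δ * k3 0)).mul_const (a ^ δ))).add
          ((hasDerivAt_id 0).const_mul (η * k4))).add_const s
      exact h.deriv
    all_goals simp [reducedField_update_one]
  · fin_cases i <;> simp [reducedField_update_two]

end reducedField

theorem stmt_10_general
    (δ η μ k4 s : ℝ)
    (hδ : 1 ≤ δ) (hμ : 0 < μ) (hk4 : 0 < k4) (hs : 0 < s)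
    (k1 k2 k3 k1' k2' k3' : ℝ → ℝ)
    (hk1pos : ∀ x, 0 < k1 x) (hk2pos : ∀ x, 0 < k2 x) (hk3pos : ∀ x, 0 < k3 x)
    (hk1' : ∀ x, HasDerivAt k1 (k1' x) x) (hk2' : ∀ x, HasDerivAt k2 (k2' x) x)
    (hk3' : ∀ x, HasDerivAt k3 (k3' x) x)
    (G : (Fin 3 → ℝ) → (Fin 3 → ℝ))
    (hG : ∀ x, G x = ![-(k1 (x 1)) * x 0 - δ * k3 (x 2) * x 1 * (x 0) ^ δ
                        + η * k4 * x 1 + s,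
                      μ * k3 (x 2) * x 1 * (x 0) ^ δ - k4 * x 1,
                      -(k2 (x 1)) * x 2])
    (p : Fin 3 → ℝ) (hp : p = ![s / k1 0, 0, 0])
    (J : Matrix (Fin 3) (Fin 3) ℝ)
    (hJ : ∀ i j, J i j = fderiv ℝ (fun x => G x i) p (Pi.single j 1)) :
    (∀ i j : Fin 3, (j : ℕ) < (i : ℕ) → J i j = 0) ∧
    J 0 0 = -(k1 0) ∧
    J 1 1 = μ * k3 0 * (s / k1 0) ^ δ - k4 ∧
    J 2 2 = -(k2 0) ∧
    (s < k1 0 * (k4 / (μ * k3 0)) ^ (1/δ) → ∀ i, J i i < 0) ∧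
    (k1 0 * (k4 / (μ * k3 0)) ^ (1/δ) < s → ∃ i, 0 < J i i) := by
  subst hp
  obtain rfl : G = reducedField δ η μ k4 s k1 k2 k3 := funext hG
  obtain rfl : J = _ := (Matrix.ext hJ).trans (jacobian_reducedField δ η μ k4 s k1 k2 k3 hδ
    hk1' (fun x => (hk2' x).differentiableAt) (fun x => (hk3' x).differentiableAt) (s / k1 0))
  have hm : 0 < μ * k3 0 := mul_pos hμ (hk3pos 0)
  have hδ₀ : 0 < δ := one_pos.trans_le hδ
  refine ⟨?_, rfl, rfl, rfl, fun hstable i => ?_, fun hunstable => ⟨1, ?_⟩⟩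
  · intro i j hji
    fin_cases i <;> fin_cases j <;> simp at hji ⊢
  · fin_cases i
    · simpa using hk1pos 0
    · exact (mul_div_rpow_sub_neg_iff (hk1pos 0) hm hk4.le hs.le hδ₀).2 hstable
    · simpa using hk2pos 0
  · exact (sub_pos_mul_div_rpow_iff (hk1pos 0) hm hk4.le hs.le hδ₀).2 hunstable

/-- The Jacobian of the reduced system at the equilibrium
(s/k_1(0), 0, 0) is upper triangular with diagonal entries -k_1(0),
μ k_3(0)(s/k_1(0))^δ - k_4 and -k_2(0); hence the equilibrium is asymptotically
stable (all eigenvalues negative) if s < k_1(0)(k_4/(μ k_3(0)))^{1/δ} and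
unstable (a positive eigenvalue exists) if s > k_1(0)(k_4/(μ k_3(0)))^{1/δ}. -/
theorem stmt_10
    (δ η μ k4 s : ℝ)
    (hδ : 1 ≤ δ) (hη : 0 < η) (hμ : 0 < μ) (hk4 : 0 < k4) (hs : 0 < s)
    (k1 k2 k3 k1' k2' k3' : ℝ → ℝ)
    (hk1pos : ∀ x, 0 < k1 x) (hk2pos : ∀ x, 0 < k2 x) (hk3pos : ∀ x, 0 < k3 x)
    (hk1' : ∀ x, HasDerivAt k1 (k1' x) x) (hk2' : ∀ x, HasDerivAt k2 (k2' x) x)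
    (hk3' : ∀ x, HasDerivAt k3 (k3' x) x)
    (hk1mono : StrictMono k1) (hk2mono : StrictMono k2) (hk3mono : StrictMono k3)
    (G : (Fin 3 → ℝ) → (Fin 3 → ℝ))
    (hG : ∀ x, G x = ![-(k1 (x 1)) * x 0 - δ * k3 (x 2) * x 1 * (x 0) ^ δ
                        + η * k4 * x 1 + s,
                      μ * k3 (x 2) * x 1 * (x 0) ^ δ - k4 * x 1,
                      -(k2 (x 1)) * x 2])
    (p : Fin 3 → ℝ) (hp : p = ![s / k1 0, 0, 0])
    (J : Matrix (Fin 3) (Fin 3) ℝ)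
    (hJ : ∀ i j, J i j = fderiv ℝ (fun x => G x i) p (Pi.single j 1)) :
    (∀ i j : Fin 3, (j : ℕ) < (i : ℕ) → J i j = 0) ∧
    J 0 0 = -(k1 0) ∧
    J 1 1 = μ * k3 0 * (s / k1 0) ^ δ - k4 ∧
    J 2 2 = -(k2 0) ∧
    (s < k1 0 * (k4 / (μ * k3 0)) ^ (1/δ) → ∀ i, J i i < 0) ∧
    (k1 0 * (k4 / (μ * k3 0)) ^ (1/δ) < s → ∃ i, 0 < J i i) :=
  stmt_10_general δ η μ k4 s hδ hμ hk4 hs k1 k2 k3 k1' k2' k3' hk1pos hk2pos hk3pos hk1' hk2' hk3' G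
    hG p hp J hJ
end

section
/- For the equilibrium (U_1, u_2*, 0) with u_2* > 0, the Jacobian matrix of the reduced system has block structure with a 2×2 upper-left block [[A_1, A_2],[A_3, 0]] where A_1 = -k_1(u_2*) - δ² k_3(0) u_2* U_1^{δ-1} < 0, A_2 = -k_1'(u_2*) U_1 - (k_4/μ)(δ - ημ) < 0, A_3 = δ μ k_3(0) u_2* U_1^{δ-1} > 0, and third eigenvalue -k_2(u_2*) < 0; hence all eigenvalues have negative real part and the equilibrium is asymptotically stable. -/
/-
At the boundary equilibrium the third coordinate vanishes, so the third row of the Jacobian is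
`(0, 0, -k₂(u₂*))`, and the equilibrium relation `μ k₃(0) U₁^δ = k₄` kills the `(1,1)` entry.
The characteristic polynomial therefore factors as `(λ + k₂(u₂*)) (λ² - A₁ λ - A₂ A₃)`, and a
real quadratic with positive coefficients has its roots in the open left half-plane.
-/

theorem fderiv_apply_single_eq_of_hasDerivAt_update {𝕜 ι F : Type*} [NontriviallyNormedField 𝕜]
    [Fintype ι] [DecidableEq ι] [NormedAddCommGroup F] [NormedSpace 𝕜 F]
    {f : (ι → 𝕜) → F} {p : ι → 𝕜} {j : ι} {D : F} (hf : DifferentiableAt 𝕜 f p)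
    (hD : HasDerivAt (fun t => f (Function.update p j t)) D (p j)) :
    fderiv 𝕜 f p (Pi.single j 1) = D :=
  (hf.hasFDerivAt.comp_hasDerivAt_of_eq (p j) (hasDerivAt_update p j (p j))
    (Function.update_eq_self j p).symm).unique hD

theorem re_lt_zero_of_sq_add_mul_add_eq_zero {a b : ℝ} (ha : 0 < a) (hb : 0 < b) {z : ℂ}
    (hz : z ^ 2 + a * z + b = 0) : z.re < 0 := by
  have hre := congrArg Complex.re hz
  have him := congrArg Complex.im hz
  simp only [pow_two, Complex.add_re, Complex.add_im, Complex.mul_re, Complex.mul_im,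
    Complex.ofReal_re, Complex.ofReal_im, Complex.zero_re, Complex.zero_im] at hre him
  by_contra! hnonneg
  have him_zero : z.im = 0 := by
    rcases mul_eq_zero.1 (show z.im * (2 * z.re + a) = 0 by linear_combination him) with h | h
    · exact h
    · linarith
  nlinarith

theorem re_lt_zero_of_mem_spectrum_fin_three {J : Matrix (Fin 3) (Fin 3) ℝ}
    (h20 : J 2 0 = 0) (h21 : J 2 1 = 0) (htrace : J 0 0 + J 1 1 < 0)
    (hdet : 0 < J 0 0 * J 1 1 - J 0 1 * J 1 0) (h22 : J 2 2 < 0) {z : ℂ}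
    (hz : z ∈ spectrum ℂ (J.map Complex.ofReal)) : z.re < 0 := by
  rw [Matrix.mem_spectrum_iff_isRoot_charpoly, Polynomial.IsRoot, Matrix.eval_charpoly,
    Matrix.det_fin_three] at hz
  simp only [Matrix.scalar_apply, Matrix.sub_apply, Matrix.map_apply, Matrix.diagonal_apply_eq,
    Matrix.diagonal_apply_ne, ne_eq, Fin.reduceEq, not_false_eq_true, h20, h21,
    Complex.ofReal_zero] at hz
  have hfactor : (z - J 2 2) * (z ^ 2 + ((-(J 0 0 + J 1 1) : ℝ) : ℂ) * z
      + ((J 0 0 * J 1 1 - J 0 1 * J 1 0 : ℝ) : ℂ)) = 0 := by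
    push_cast
    linear_combination hz
  rcases mul_eq_zero.1 hfactor with h | h
  · simpa [sub_eq_zero.1 h] using h22
  · exact re_lt_zero_of_sq_add_mul_add_eq_zero (by linarith) hdet h

namespace reducedField

variable {δ η μ k4 s U u : ℝ} {k1 k2 k3 : ℝ → ℝ}

theorem differentiableAt_apply (hδ : 1 ≤ δ) (hk1 : Differentiable ℝ k1)
    (hk2 : Differentiable ℝ k2) (hk3 : Differentiable ℝ k3) (p : Fin 3 → ℝ) (i : Fin 3) :
    DifferentiableAt ℝ (fun x => reducedField δ η μ k4 s k1 k2 k3 x i) p := by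
  fin_cases i <;>
    simp only [reducedField, Fin.zero_eta, Fin.mk_one, Fin.reduceFinMk, Matrix.cons_val] <;>
    fun_prop (disch := exact Or.inr hδ)

theorem fderiv_apply_zero_single_zero (hδ : 1 ≤ δ)
    (hf : DifferentiableAt ℝ (fun x => reducedField δ η μ k4 s k1 k2 k3 x 0) ![U, u, 0]) :
    fderiv ℝ (fun x => reducedField δ η μ k4 s k1 k2 k3 x 0) ![U, u, 0] (Pi.single 0 1)
      = -(k1 u) - δ ^ 2 * k3 0 * u * U ^ (δ - 1) := by
  refine fderiv_apply_single_eq_of_hasDerivAt_update hf ?_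
  show HasDerivAt (fun t => -(k1 u) * t - δ * k3 0 * u * t ^ δ + η * k4 * u + s) _ U
  exact ((((hasDerivAt_id U).const_mul (-(k1 u))).sub
    ((Real.hasDerivAt_rpow_const (Or.inr hδ)).const_mul (δ * k3 0 * u))).add_const
      (η * k4 * u)).add_const s |>.congr_deriv (by ring)

theorem fderiv_apply_zero_single_one {k1' : ℝ} (hk1 : HasDerivAt k1 k1' u)
    (hf : DifferentiableAt ℝ (fun x => reducedField δ η μ k4 s k1 k2 k3 x 0) ![U, u, 0]) :
    fderiv ℝ (fun x => reducedField δ η μ k4 s k1 k2 k3 x 0) ![U, u, 0] (Pi.single 1 1)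
      = -k1' * U - δ * k3 0 * U ^ δ + η * k4 := by
  refine fderiv_apply_single_eq_of_hasDerivAt_update hf ?_
  show HasDerivAt (fun t => -(k1 t) * U - δ * k3 0 * t * U ^ δ + η * k4 * t + s) _ u
  exact (((hk1.neg.mul_const U).sub
    (((hasDerivAt_id u).const_mul (δ * k3 0)).mul_const (U ^ δ))).add
      ((hasDerivAt_id u).const_mul (η * k4))).add_const s |>.congr_deriv (by ring)

theorem fderiv_apply_one_single_zero (hδ : 1 ≤ δ)
    (hf : DifferentiableAt ℝ (fun x => reducedField δ η μ k4 s k1 k2 k3 x 1) ![U, u, 0]) :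
    fderiv ℝ (fun x => reducedField δ η μ k4 s k1 k2 k3 x 1) ![U, u, 0] (Pi.single 0 1)
      = δ * μ * k3 0 * u * U ^ (δ - 1) := by
  refine fderiv_apply_single_eq_of_hasDerivAt_update hf ?_
  show HasDerivAt (fun t => μ * k3 0 * u * t ^ δ - k4 * u) _ U
  exact ((Real.hasDerivAt_rpow_const (Or.inr hδ)).const_mul (μ * k3 0 * u)).sub_const (k4 * u)
    |>.congr_deriv (by ring)

theorem fderiv_apply_one_single_one
    (hf : DifferentiableAt ℝ (fun x => reducedField δ η μ k4 s k1 k2 k3 x 1) ![U, u, 0]) :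
    fderiv ℝ (fun x => reducedField δ η μ k4 s k1 k2 k3 x 1) ![U, u, 0] (Pi.single 1 1)
      = μ * k3 0 * U ^ δ - k4 := by
  refine fderiv_apply_single_eq_of_hasDerivAt_update hf ?_
  show HasDerivAt (fun t => μ * k3 0 * t * U ^ δ - k4 * t) _ u
  exact (((hasDerivAt_id u).const_mul (μ * k3 0)).mul_const (U ^ δ)).sub
    ((hasDerivAt_id u).const_mul k4) |>.congr_deriv (by ring)

theorem fderiv_apply_two_single_zero
    (hf : DifferentiableAt ℝ (fun x => reducedField δ η μ k4 s k1 k2 k3 x 2) ![U, u, 0]) :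
    fderiv ℝ (fun x => reducedField δ η μ k4 s k1 k2 k3 x 2) ![U, u, 0] (Pi.single 0 1) = 0 := by
  refine fderiv_apply_single_eq_of_hasDerivAt_update hf ?_
  show HasDerivAt (fun _ => -(k2 u) * 0) _ U
  exact hasDerivAt_const U _

theorem fderiv_apply_two_single_one
    (hf : DifferentiableAt ℝ (fun x => reducedField δ η μ k4 s k1 k2 k3 x 2) ![U, u, 0]) :
    fderiv ℝ (fun x => reducedField δ η μ k4 s k1 k2 k3 x 2) ![U, u, 0] (Pi.single 1 1) = 0 := by
  refine fderiv_apply_single_eq_of_hasDerivAt_update hf ?_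
  show HasDerivAt (fun t => -(k2 t) * 0) _ u
  simpa using hasDerivAt_const u (0 : ℝ)

theorem fderiv_apply_two_single_two
    (hf : DifferentiableAt ℝ (fun x => reducedField δ η μ k4 s k1 k2 k3 x 2) ![U, u, 0]) :
    fderiv ℝ (fun x => reducedField δ η μ k4 s k1 k2 k3 x 2) ![U, u, 0] (Pi.single 2 1)
      = -k2 u := by
  refine fderiv_apply_single_eq_of_hasDerivAt_update hf ?_
  show HasDerivAt (fun t => -(k2 u) * t) _ 0
  exact (hasDerivAt_id (0 : ℝ)).const_mul (-k2 u) |>.congr_deriv (mul_one _)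

end reducedField

theorem stmt_12_general
    (δ η μ k4 s : ℝ)
    (hδ : 1 ≤ δ) (hμ : 0 < μ) (hk4 : 0 < k4)
    (hδημ : η * μ < δ)
    (k1 k2 k3 k1' k2' k3' : ℝ → ℝ)
    (hk1pos : ∀ x, 0 < k1 x) (hk2pos : ∀ x, 0 < k2 x) (hk3pos : ∀ x, 0 < k3 x)
    (hk1' : ∀ x, HasDerivAt k1 (k1' x) x) (hk2' : ∀ x, HasDerivAt k2 (k2' x) x)
    (hk3' : ∀ x, HasDerivAt k3 (k3' x) x)
    (hk1'pos : ∀ x, 0 < k1' x)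
    (U1 : ℝ) (hU1 : U1 = (k4 / (μ * k3 0)) ^ (1/δ))
    (u2s : ℝ) (hu2s : 0 < u2s)
    (G : (Fin 3 → ℝ) → (Fin 3 → ℝ))
    (hG : ∀ x, G x = ![-(k1 (x 1)) * x 0 - δ * k3 (x 2) * x 1 * (x 0) ^ δ
                        + η * k4 * x 1 + s,
                      μ * k3 (x 2) * x 1 * (x 0) ^ δ - k4 * x 1,
                      -(k2 (x 1)) * x 2])
    (p : Fin 3 → ℝ) (hp : p = ![U1, u2s, 0])
    (J : Matrix (Fin 3) (Fin 3) ℝ)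
    (hJ : ∀ i j, J i j = fderiv ℝ (fun x => G x i) p (Pi.single j 1)) :
    J 0 0 = -(k1 u2s) - δ ^ 2 * k3 0 * u2s * U1 ^ (δ - 1) ∧ J 0 0 < 0 ∧
    J 0 1 = -(k1' u2s) * U1 - (k4 / μ) * (δ - η * μ) ∧ J 0 1 < 0 ∧
    J 1 0 = δ * μ * k3 0 * u2s * U1 ^ (δ - 1) ∧ 0 < J 1 0 ∧
    J 1 1 = 0 ∧ J 2 0 = 0 ∧ J 2 1 = 0 ∧
    J 2 2 = -(k2 u2s) ∧ J 2 2 < 0 ∧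
    (∀ lam : ℂ, lam ∈ spectrum ℂ (J.map Complex.ofReal) → lam.re < 0) := by
  obtain rfl : G = reducedField δ η μ k4 s k1 k2 k3 := funext hG
  subst hp
  have hdiff : ∀ i, DifferentiableAt ℝ (fun x => reducedField δ η μ k4 s k1 k2 k3 x i)
      ![U1, u2s, 0] :=
    reducedField.differentiableAt_apply hδ (fun x => (hk1' x).differentiableAt)
      (fun x => (hk2' x).differentiableAt) (fun x => (hk3' x).differentiableAt) _
  have hk30 := hk3pos 0
  have hU1pos : 0 < U1 := hU1 ▸ by positivity
  have hequil : k3 0 * U1 ^ δ = k4 / μ := by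
    rw [hU1, one_div, Real.rpow_inv_rpow (by positivity) (by positivity)]
    field_simp
  have h00 := (hJ 0 0).trans (reducedField.fderiv_apply_zero_single_zero hδ (hdiff 0))
  have h01 : J 0 1 = -(k1' u2s) * U1 - (k4 / μ) * (δ - η * μ) := by
    rw [hJ, reducedField.fderiv_apply_zero_single_one (hk1' u2s) (hdiff 0), mul_assoc δ, hequil]
    field_simp
    ring
  have h10 := (hJ 1 0).trans (reducedField.fderiv_apply_one_single_zero hδ (hdiff 1))
  have h11 : J 1 1 = 0 := by
    rw [hJ, reducedField.fderiv_apply_one_single_one (hdiff 1), mul_assoc, hequil]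
    field_simp
    ring
  have h20 := (hJ 2 0).trans (reducedField.fderiv_apply_two_single_zero (hdiff 2))
  have h21 := (hJ 2 1).trans (reducedField.fderiv_apply_two_single_one (hdiff 2))
  have h22 := (hJ 2 2).trans (reducedField.fderiv_apply_two_single_two (hdiff 2))
  have hA1 : J 0 0 < 0 := by
    have : 0 < δ ^ 2 * k3 0 * u2s * U1 ^ (δ - 1) := by positivity
    rw [h00]; linarith [hk1pos u2s]
  have hA2 : J 0 1 < 0 := by
    have : 0 < k1' u2s * U1 := mul_pos (hk1'pos u2s) hU1pos
    have : 0 < k4 / μ * (δ - η * μ) := mul_pos (div_pos hk4 hμ) (sub_pos.2 hδημ)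
    rw [h01]; linarith
  have hA3 : 0 < J 1 0 := by rw [h10]; positivity
  have hA4 : J 2 2 < 0 := by rw [h22]; linarith [hk2pos u2s]
  have hdet : 0 < J 0 0 * J 1 1 - J 0 1 * J 1 0 := by
    rw [h11, mul_zero, zero_sub, neg_pos]; exact mul_neg_of_neg_of_pos hA2 hA3
  exact ⟨h00, hA1, h01, hA2, h10, hA3, h11, h20, h21, h22, hA4,
    fun _ => re_lt_zero_of_mem_spectrum_fin_three h20 h21 (by linarith) hdet hA4⟩

/-- At the equilibrium (U_1, u_2*, 0) with u_2* > 0, the Jacobian of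
the reduced system has the block structure with 2×2 upper-left block
[[A₁, A₂],[A₃, 0]], A₁ < 0, A₂ < 0, A₃ > 0, third eigenvalue -k_2(u_2*) < 0;
hence all eigenvalues have negative real part (asymptotic stability). -/
theorem stmt_12
    (δ η μ k4 s : ℝ)
    (hδ : 1 ≤ δ) (hη : 0 < η) (hμ : 0 < μ) (hk4 : 0 < k4)
    (hημ : 0 ≤ η * μ) (hδημ : η * μ < δ)
    (k1 k2 k3 k1' k2' k3' : ℝ → ℝ)
    (hk1pos : ∀ x, 0 < k1 x) (hk2pos : ∀ x, 0 < k2 x) (hk3pos : ∀ x, 0 < k3 x)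
    (hk1' : ∀ x, HasDerivAt k1 (k1' x) x) (hk2' : ∀ x, HasDerivAt k2 (k2' x) x)
    (hk3' : ∀ x, HasDerivAt k3 (k3' x) x)
    (hk1'pos : ∀ x, 0 < k1' x) (hk2'pos : ∀ x, 0 < k2' x) (hk3'pos : ∀ x, 0 < k3' x)
    (U1 : ℝ) (hU1 : U1 = (k4 / (μ * k3 0)) ^ (1/δ))
    (hs : k1 0 * U1 < s)
    (u2s : ℝ) (hu2s : 0 < u2s)
    (hroot : 0 = -(k1 u2s) * U1 - (k4 / μ) * (δ - η * μ) * u2s + s)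
    (G : (Fin 3 → ℝ) → (Fin 3 → ℝ))
    (hG : ∀ x, G x = ![-(k1 (x 1)) * x 0 - δ * k3 (x 2) * x 1 * (x 0) ^ δ
                        + η * k4 * x 1 + s,
                      μ * k3 (x 2) * x 1 * (x 0) ^ δ - k4 * x 1,
                      -(k2 (x 1)) * x 2])
    (p : Fin 3 → ℝ) (hp : p = ![U1, u2s, 0])
    (J : Matrix (Fin 3) (Fin 3) ℝ)
    (hJ : ∀ i j, J i j = fderiv ℝ (fun x => G x i) p (Pi.single j 1)) :
    J 0 0 = -(k1 u2s) - δ ^ 2 * k3 0 * u2s * U1 ^ (δ - 1) ∧ J 0 0 < 0 ∧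
    J 0 1 = -(k1' u2s) * U1 - (k4 / μ) * (δ - η * μ) ∧ J 0 1 < 0 ∧
    J 1 0 = δ * μ * k3 0 * u2s * U1 ^ (δ - 1) ∧ 0 < J 1 0 ∧
    J 1 1 = 0 ∧ J 2 0 = 0 ∧ J 2 1 = 0 ∧
    J 2 2 = -(k2 u2s) ∧ J 2 2 < 0 ∧
    (∀ lam : ℂ, lam ∈ spectrum ℂ (J.map Complex.ofReal) → lam.re < 0) :=
  stmt_12_general δ η μ k4 s hδ hμ hk4 hδημ k1 k2 k3 k1' k2' k3' hk1pos hk2pos hk3pos hk1' hk2' hk3'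
    hk1'pos U1 hU1 u2s hu2s G hG p hp J hJ
end

section
/- For the planar subsystem with δ ≥ ημ and nonnegative initial data, the quantity u_1 + η u_2 is nonincreasing along solutions (d/dt(u_1 + η u_2) = -(δ - ημ) k_3 u_2 u_1^δ ≤ 0), and hence both u_1(t) and u_2(t) remain bounded by (u_1(0) + η u_2(0))/min(1, η) for all t ≥ 0. -/
/-! Adding η times the second equation to the first cancels the `k₄` terms, so
`u₁ + η u₂` has derivative `-(δ - ημ) k₃ u₂ u₁^δ`, which is nonpositive while the solution
stays nonnegative. Hence `u₁ + η u₂` does not exceed its initial value, and since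
`min 1 η · max u₁ u₂ ≤ u₁ + η u₂` for nonnegative `u₁, u₂`, both components are bounded. -/

open Set

theorem antitoneOn_Ici_of_hasDerivAt_nonpos {f f' : ℝ → ℝ} {a : ℝ}
    (hf : ∀ t, a ≤ t → HasDerivAt f (f' t) t) (hf' : ∀ t, a ≤ t → f' t ≤ 0) :
    AntitoneOn f (Ici a) :=
  antitoneOn_of_hasDerivWithinAt_nonpos (convex_Ici a)
    (fun t ht => (hf t ht).continuousAt.continuousWithinAt)
    (fun t ht => by
      rw [interior_Ici] at ht
      exact (hf t (le_of_lt ht)).hasDerivWithinAt)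
    (fun t ht => by
      rw [interior_Ici] at ht
      exact hf' t (le_of_lt ht))

theorem le_div_min_one_of_add_mul_le {x y η S : ℝ} (hx : 0 ≤ x) (hy : 0 ≤ y) (hη : 0 < η)
    (h : x + η * y ≤ S) : x ≤ S / min 1 η ∧ y ≤ S / min 1 η := by
  have hm : 0 < min 1 η := lt_min one_pos hη
  have hm1 : min 1 η ≤ 1 := min_le_left _ _
  have hmη : min 1 η ≤ η := min_le_right _ _
  rw [le_div_iff₀ hm, le_div_iff₀ hm]
  constructor <;> nlinarith

section PlanarSystem

variable {δ η μ k3 k4 : ℝ} {u1 u2 : ℝ → ℝ} {t : ℝ}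

theorem hasDerivAt_add_mul_of_planarSystem
    (h1 : HasDerivAt u1 (-δ * k3 * u2 t * (u1 t) ^ δ + η * k4 * u2 t) t)
    (h2 : HasDerivAt u2 (μ * k3 * u2 t * (u1 t) ^ δ - k4 * u2 t) t) :
    HasDerivAt (fun τ => u1 τ + η * u2 τ) (-(δ - η * μ) * k3 * u2 t * (u1 t) ^ δ) t :=
  (h1.add (h2.const_mul η)).congr_deriv (by ring)

theorem dissipation_nonpos (hδημ : η * μ ≤ δ) (hk3 : 0 ≤ k3) {x y : ℝ} (hx : 0 ≤ x)
    (hy : 0 ≤ y) : -(δ - η * μ) * k3 * y * x ^ δ ≤ 0 := by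
  have : 0 ≤ (δ - η * μ) * k3 * y * x ^ δ := by
    have := sub_nonneg.2 hδημ
    have := Real.rpow_nonneg hx δ
    positivity
  linarith

end PlanarSystem

theorem stmt_17_general
    (δ η μ k3 k4 : ℝ)
    (hη : 0 < η) (hk3 : 0 < k3)
    (hδημ : η * μ ≤ δ)
    (u1 u2 : ℝ → ℝ)
    (hnonneg : ∀ t, 0 ≤ t → 0 ≤ u1 t ∧ 0 ≤ u2 t)
    (h1 : ∀ t, 0 ≤ t → HasDerivAt u1 (-δ * k3 * u2 t * (u1 t) ^ δ + η * k4 * u2 t) t)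
    (h2 : ∀ t, 0 ≤ t → HasDerivAt u2 (μ * k3 * u2 t * (u1 t) ^ δ - k4 * u2 t) t) :
    (∀ t, 0 ≤ t → HasDerivAt (fun τ => u1 τ + η * u2 τ)
        (-(δ - η * μ) * k3 * u2 t * (u1 t) ^ δ) t ∧
        -(δ - η * μ) * k3 * u2 t * (u1 t) ^ δ ≤ 0) ∧
    (∀ s t, 0 ≤ s → s ≤ t → u1 t + η * u2 t ≤ u1 s + η * u2 s) ∧
    (∀ t, 0 ≤ t → u1 t ≤ (u1 0 + η * u2 0) / min 1 η ∧
                   u2 t ≤ (u1 0 + η * u2 0) / min 1 η) := by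
  have hderiv : ∀ t, 0 ≤ t → HasDerivAt (fun τ => u1 τ + η * u2 τ)
      (-(δ - η * μ) * k3 * u2 t * (u1 t) ^ δ) t :=
    fun t ht => hasDerivAt_add_mul_of_planarSystem (h1 t ht) (h2 t ht)
  have hnonpos : ∀ t, 0 ≤ t → -(δ - η * μ) * k3 * u2 t * (u1 t) ^ δ ≤ 0 :=
    fun t ht => dissipation_nonpos hδημ hk3.le (hnonneg t ht).1 (hnonneg t ht).2
  have hanti : ∀ s t, 0 ≤ s → s ≤ t → u1 t + η * u2 t ≤ u1 s + η * u2 s :=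
    fun s t hs hst =>
      antitoneOn_Ici_of_hasDerivAt_nonpos hderiv hnonpos hs (hs.trans hst) hst
  refine ⟨fun t ht => ⟨hderiv t ht, hnonpos t ht⟩, hanti, fun t ht => ?_⟩
  exact le_div_min_one_of_add_mul_le (hnonneg t ht).1 (hnonneg t ht).2 hη
    (hanti 0 t le_rfl ht)

/-- For the planar subsystem with δ ≥ ημ and nonnegative solutions,
u₁ + η u₂ is nonincreasing (its derivative is -(δ-ημ) k₃ u₂ u₁^δ ≤ 0), hence
u₁(t) and u₂(t) are bounded by (u₁(0) + η u₂(0))/min 1 η for all t ≥ 0. -/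
theorem stmt_17
    (δ η μ k3 k4 : ℝ)
    (hδ : 0 < δ) (hη : 0 < η) (hμ : 0 < μ) (hk3 : 0 < k3) (hk4 : 0 < k4)
    (hδημ : η * μ ≤ δ)
    (u1 u2 : ℝ → ℝ)
    (hnonneg : ∀ t, 0 ≤ t → 0 ≤ u1 t ∧ 0 ≤ u2 t)
    (h1 : ∀ t, 0 ≤ t → HasDerivAt u1 (-δ * k3 * u2 t * (u1 t) ^ δ + η * k4 * u2 t) t)
    (h2 : ∀ t, 0 ≤ t → HasDerivAt u2 (μ * k3 * u2 t * (u1 t) ^ δ - k4 * u2 t) t) :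
    (∀ t, 0 ≤ t → HasDerivAt (fun τ => u1 τ + η * u2 τ)
        (-(δ - η * μ) * k3 * u2 t * (u1 t) ^ δ) t ∧
        -(δ - η * μ) * k3 * u2 t * (u1 t) ^ δ ≤ 0) ∧
    (∀ s t, 0 ≤ s → s ≤ t → u1 t + η * u2 t ≤ u1 s + η * u2 s) ∧
    (∀ t, 0 ≤ t → u1 t ≤ (u1 0 + η * u2 0) / min 1 η ∧
                   u2 t ≤ (u1 0 + η * u2 0) / min 1 η) :=
  stmt_17_general δ η μ k3 k4 hη hk3 hδημ u1 u2 hnonneg h1 h2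
end
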